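/- arXiv:1609.03547 — 6 statements merged into one kernel-verified Lean document; each statement's English description precedes it below -/
import Mathlib

section
/- For positive integers n > μ ≥ l ≥ 1 and λ ≥ 1, the covering number satisfies the Schönheim recursion: C_λ(n,μ,l) ≥ ⌈(n/μ)·C_λ(n-1,μ-1,l-1)⌉, where C_λ(n,μ,0) = λ. -/
/-!
Take an optimal `l`-(n+1, μ, λ) covering `B`. For each point `x`, the blocks through `x` with `x`
deleted form an `(l-1)`-(n, μ-1, λ) covering of the remaining points (the derived covering), so `x`
lies in at least `C_λ(n, μ-1, l-1)` blocks. Counting point-block incidences in two ways gives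
`(n+1) · C_λ(n, μ-1, l-1) ≤ μ · C_λ(n+1, μ, l)`.
-/

/-- The minimum number of blocks in an `l`-(n,μ,λ) covering. -/
noncomputable def coveringNumber (lam n μ l : ℕ) : ℕ :=
  sInf {m | ∃ B : Multiset (Finset (Fin n)),
      (∀ b ∈ B, b.card = μ) ∧
      (∀ s : Finset (Fin n), s.card = l → lam ≤ Multiset.card (B.filter fun b => s ⊆ b)) ∧
      Multiset.card B = m}

open Finset

theorem Multiset.sum_card_filter_mem {α : Type*} [Fintype α] [DecidableEq α]
    (B : Multiset (Finset α)) :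
    ∑ a, Multiset.card (B.filter (a ∈ ·)) = (B.map Finset.card).sum := by
  induction B using Multiset.induction with
  | empty => simp
  | cons b B ih =>
    simp only [Multiset.filter_cons, Multiset.card_add, sum_add_distrib, ih, Multiset.map_cons,
      Multiset.sum_cons, apply_ite Multiset.card, Multiset.card_singleton, Multiset.card_zero,
      sum_boole, Nat.cast_id, filter_mem_eq_inter, univ_inter]

section Covering

variable {α : Type*} [DecidableEq α]

def IsCovering (lam μ l : ℕ) (B : Multiset (Finset α)) : Prop :=
  (∀ b ∈ B, #b = μ) ∧ ∀ s : Finset α, #s = l → lam ≤ Multiset.card (B.filter (s ⊆ ·))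

theorem IsCovering.sum_card {lam μ l : ℕ} {B : Multiset (Finset α)} (hB : IsCovering lam μ l B) :
    (B.map Finset.card).sum = Multiset.card B * μ := by
  rw [Multiset.map_congr rfl hB.1, Multiset.map_const', Multiset.sum_replicate, smul_eq_mul]

theorem isCovering_nsmul_powersetCard [Fintype α] (lam : ℕ) {μ l : ℕ} (hlμ : l ≤ μ)
    (hμ : μ ≤ Fintype.card α) :
    IsCovering lam μ l (lam • (powersetCard μ (univ : Finset α)).val) := by
  refine ⟨fun b hb => ?_, fun s hs => ?_⟩
  · exact (mem_powersetCard.mp (Multiset.mem_nsmul.mp hb).2).2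
  · obtain ⟨t, hst, ht⟩ := exists_superset_card_eq (hs.trans_le hlμ) hμ
    have ht_mem : t ∈ (powersetCard μ (univ : Finset α)).val.filter (s ⊆ ·) :=
      Multiset.mem_filter.mpr ⟨mem_powersetCard.mpr ⟨subset_univ t, ht⟩, hst⟩
    rw [Multiset.filter_nsmul, Multiset.card_nsmul]
    exact Nat.le_mul_of_pos_right lam (Multiset.card_pos_iff_exists_mem.mpr ⟨t, ht_mem⟩)

end Covering

theorem coveringNumber_le_card {lam n μ l : ℕ} {B : Multiset (Finset (Fin n))}
    (hB : IsCovering lam μ l B) : coveringNumber lam n μ l ≤ Multiset.card B :=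
  Nat.sInf_le ⟨B, hB.1, hB.2, rfl⟩

theorem exists_isCovering_card_eq_coveringNumber (lam : ℕ) {n μ l : ℕ} (hlμ : l ≤ μ)
    (hμn : μ ≤ n) :
    ∃ B : Multiset (Finset (Fin n)), IsCovering lam μ l B ∧
      Multiset.card B = coveringNumber lam n μ l := by
  have hcov := isCovering_nsmul_powersetCard (α := Fin n) lam hlμ (by simpa using hμn)
  obtain ⟨B, hBμ, hBl, hB⟩ : coveringNumber lam n μ l ∈ _ :=
    Nat.sInf_mem ⟨_, _, hcov.1, hcov.2, rfl⟩
  exact ⟨B, ⟨hBμ, hBl⟩, hB⟩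

noncomputable def deriveAt {n : ℕ} (x : Fin (n + 1)) (B : Multiset (Finset (Fin (n + 1)))) :
    Multiset (Finset (Fin n)) :=
  (B.filter (x ∈ ·)).map fun b => b.preimage x.succAbove Fin.succAbove_right_injective.injOn

theorem card_deriveAt {n : ℕ} (x : Fin (n + 1)) (B : Multiset (Finset (Fin (n + 1)))) :
    Multiset.card (deriveAt x B) = Multiset.card (B.filter (x ∈ ·)) :=
  Multiset.card_map _ _

theorem card_preimage_succAbove {n : ℕ} {x : Fin (n + 1)} {b : Finset (Fin (n + 1))}
    (hx : x ∈ b) : #(b.preimage x.succAbove Fin.succAbove_right_injective.injOn) = #b - 1 := by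
  classical
  rw [card_preimage]
  simp [Fin.range_succAbove, filter_ne', card_erase_of_mem hx]

theorem IsCovering.deriveAt {lam μ l n : ℕ} {B : Multiset (Finset (Fin (n + 1)))}
    (hB : IsCovering lam μ l B) (hl : 1 ≤ l) (x : Fin (n + 1)) :
    IsCovering lam (μ - 1) (l - 1) (deriveAt x B) := by
  refine ⟨fun b' hb' => ?_, fun s hs => ?_⟩
  · obtain ⟨b, hb, rfl⟩ := Multiset.mem_map.mp hb'
    obtain ⟨hbB, hxb⟩ := Multiset.mem_filter.mp hb
    rw [card_preimage_succAbove hxb, hB.1 b hbB]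
  · set t := insert x (s.map x.succAboveEmb)
    have hxt : x ∉ s.map x.succAboveEmb := by simp [Fin.succAbove_ne]
    have ht : #t = l := by rw [card_insert_of_notMem hxt, card_map]; omega
    rw [_root_.deriveAt, Multiset.filter_map, Multiset.card_map, Multiset.filter_filter]
    refine (hB.2 t ht).trans (Multiset.card_le_card (Multiset.monotone_filter_right B ?_))
    intro b htb
    rw [insert_subset_iff] at htb
    exact ⟨fun a ha => mem_preimage.mpr (htb.2 (mem_map_of_mem _ ha)), htb.1⟩

theorem succ_mul_coveringNumber_le {lam n μ l : ℕ} (hl : 1 ≤ l) (hlμ : l ≤ μ) (hμn : μ ≤ n + 1) :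
    (n + 1) * coveringNumber lam n (μ - 1) (l - 1) ≤ coveringNumber lam (n + 1) μ l * μ := by
  obtain ⟨B, hB, hBcard⟩ := exists_isCovering_card_eq_coveringNumber lam hlμ hμn
  calc (n + 1) * coveringNumber lam n (μ - 1) (l - 1)
      = ∑ _x : Fin (n + 1), coveringNumber lam n (μ - 1) (l - 1) := by simp
    _ ≤ ∑ x : Fin (n + 1), Multiset.card (B.filter (x ∈ ·)) := sum_le_sum fun x _ => by
      rw [← card_deriveAt]
      exact coveringNumber_le_card (hB.deriveAt hl x)
    _ = coveringNumber lam (n + 1) μ l * μ := by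
      rw [Multiset.sum_card_filter_mem, hB.sum_card, hBcard]

theorem stmt_2_general (lam n μ l : ℕ) (hl : 1 ≤ l) (hlμ : l ≤ μ) (hμn : μ < n) :
    ⌈(n : ℚ) / (μ : ℚ) * (coveringNumber lam (n - 1) (μ - 1) (l - 1) : ℚ)⌉₊ ≤
      coveringNumber lam n μ l := by
  obtain ⟨n, rfl⟩ : ∃ n', n = n' + 1 := ⟨n - 1, by omega⟩
  have hμ : (0 : ℚ) < μ := by exact_mod_cast hl.trans hlμ
  rw [Nat.add_sub_cancel, Nat.ceil_le, div_mul_eq_mul_div, div_le_iff₀ hμ]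
  exact_mod_cast succ_mul_coveringNumber_le hl hlμ hμn.le

/-- The Schönheim recursion: `C_λ(n,μ,l) ≥ ⌈(n/μ)·C_λ(n-1,μ-1,l-1)⌉`. -/
theorem stmt_2 (lam n μ l : ℕ) (hlam : 1 ≤ lam) (hl : 1 ≤ l) (hlμ : l ≤ μ) (hμn : μ < n) :
    ⌈(n : ℚ) / (μ : ℚ) * (coveringNumber lam (n - 1) (μ - 1) (l - 1) : ℚ)⌉₊ ≤
      coveringNumber lam n μ l :=
  stmt_2_general lam n μ l hl hlμ hμn
end

section
/- Let C be an [n,k]_q linear code, let H be a parity-check matrix for C (rows spanning the dual code), and let S ⊆ {0,...,n-1} with |S| ≤ d-1 where d is the minimum distance of C. Then the matrix H(S), obtained from H by deleting all rows having a nonzero entry in some coordinate of S and deleting the columns indexed by S, is a parity-check matrix for the punctured code C punctured on S if and only if rank(H(S)) = n - k - |S| over F_q. -/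
/-!
Every row of `H` vanishing on `S` restricts to a check of the punctured code, so the row space
of `H(S)` always lies in the dual of the punctured code. As `|S| < d`, puncturing is injective on
`C`, so the punctured code still has dimension `k` and its dual has dimension `n - |S| - k`.
The inclusion is an equality exactly when the dimensions agree.
-/

variable {F : Type} [Field F] [Fintype F] [DecidableEq F]

/-- The dual code of a linear code `C`. -/
def dualCode {ι : Type} [Fintype ι] (C : Submodule F (ι → F)) : Submodule F (ι → F) where
  carrier := {x | ∀ c ∈ C, ∑ i, x i * c i = 0}
  add_mem' := by
    intro a b ha hb c hc
    simp only [Set.mem_setOf_eq, Pi.add_apply] at *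
    simp [add_mul, Finset.sum_add_distrib, ha c hc, hb c hc]
  zero_mem' := by
    intro c hc
    simp
  smul_mem' := by
    intro a x hx c hc
    simp only [Set.mem_setOf_eq, Pi.smul_apply, smul_eq_mul, mul_assoc,
      ← Finset.mul_sum, hx c hc, mul_zero]

/-- `d` is the minimum distance of the code `D`. -/
def IsMinDist {ι : Type} [Fintype ι] (D : Submodule F (ι → F)) (d : ℕ) : Prop :=
  (∀ c ∈ D, c ≠ 0 → d ≤ hammingNorm c) ∧ ∃ c ∈ D, c ≠ 0 ∧ hammingNorm c = d

/-- `H(S)`: delete the rows of `H` with a nonzero entry in `S`, and the columns in `S`. -/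
def subMat {m n : ℕ} (H : Matrix (Fin m) (Fin n) F) (S : Finset (Fin n)) :
    Matrix {i : Fin m // ∀ j ∈ S, H i j = 0} {j : Fin n // j ∉ S} F :=
  Matrix.of fun i j => H i.1 j.1

section

omit [Fintype F] [DecidableEq F]

variable {ι : Type} [Fintype ι]

lemma mem_dualCode {C : Submodule F (ι → F)} {x : ι → F} :
    x ∈ dualCode C ↔ ∀ c ∈ C, ∑ i, x i * c i = 0 :=
  Iff.rfl

lemma dualCode_eq_comap_dualAnnihilator [DecidableEq ι] (C : Submodule F (ι → F)) :
    dualCode C = C.dualAnnihilator.comap (dotProductEquiv F ι).toLinearMap := by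
  ext x
  simp [mem_dualCode, Submodule.mem_dualAnnihilator, dotProduct]

lemma finrank_dualCode (C : Submodule F (ι → F)) :
    Module.finrank F (dualCode C) = Fintype.card ι - Module.finrank F C := by
  classical
  have h := Subspace.finrank_add_finrank_dualAnnihilator_eq C
  rw [Module.finrank_fintype_fun_eq_card] at h
  rw [dualCode_eq_comap_dualAnnihilator, Submodule.comap_equiv_eq_map_symm,
    LinearEquiv.finrank_map_eq]
  omega

variable [DecidableEq ι] {S : Finset ι}

lemma restrict_mem_dualCode_map_funLeft {C : Submodule F (ι → F)} {x : ι → F}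
    (hx : x ∈ dualCode C) (hxS : ∀ j ∈ S, x j = 0) :
    (fun j : {j // j ∉ S} => x j) ∈
      dualCode (C.map (LinearMap.funLeft F F (fun j : {j // j ∉ S} => j.1))) := by
  rintro _ ⟨c, hc, rfl⟩
  rw [← hx c hc, ← Fintype.sum_subtype_add_sum_subtype (· ∈ S)]
  refine right_eq_add.mpr (Finset.sum_eq_zero fun j _ => ?_)
  rw [hxS j j.2, zero_mul]

lemma span_subMat_le_dualCode_map {m n : ℕ} {C : Submodule F (Fin n → F)}
    {H : Matrix (Fin m) (Fin n) F} (hH : Submodule.span F (Set.range fun i => H i) ≤ dualCode C)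
    (S : Finset (Fin n)) :
    Submodule.span F (Set.range fun i => (subMat H S) i) ≤
      dualCode (C.map (LinearMap.funLeft F F (fun j : {j : Fin n // j ∉ S} => j.1))) := by
  rw [Submodule.span_le]
  rintro _ ⟨i, rfl⟩
  exact restrict_mem_dualCode_map_funLeft (hH (Submodule.subset_span ⟨i.1, rfl⟩)) i.2

end

section

omit [Fintype F]

variable {ι : Type} [Fintype ι] [DecidableEq ι] {S : Finset ι}

lemma injective_domRestrict_funLeft_of_card_lt_hammingNorm {C : Submodule F (ι → F)}
    (hS : ∀ c ∈ C, c ≠ 0 → S.card < hammingNorm c) :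
    Function.Injective ((LinearMap.funLeft F F (fun j : {j // j ∉ S} => j.1)).domRestrict C) := by
  rw [← LinearMap.ker_eq_bot, LinearMap.ker_eq_bot']
  rintro ⟨c, hc⟩ hc0
  by_contra hne
  have hc_supp : hammingNorm c ≤ S.card := by
    refine Finset.card_le_card fun j hj => ?_
    by_contra hjS
    exact (Finset.mem_filter.mp hj).2 (congrFun hc0 ⟨j, hjS⟩)
  exact (hS c hc fun h => hne (Subtype.ext h)).not_ge hc_supp

lemma finrank_map_funLeft_of_card_lt_hammingNorm {C : Submodule F (ι → F)}
    (hS : ∀ c ∈ C, c ≠ 0 → S.card < hammingNorm c) :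
    Module.finrank F (C.map (LinearMap.funLeft F F (fun j : {j // j ∉ S} => j.1))) =
      Module.finrank F C := by
  rw [← LinearMap.range_domRestrict]
  exact LinearMap.finrank_range_of_inj (injective_domRestrict_funLeft_of_card_lt_hammingNorm hS)

end

/-- `H(S)` is a parity-check matrix for the punctured code iff its rank is `n-k-|S|`. -/
theorem stmt_3 (n k d mrows : ℕ)
    (C : Submodule F (Fin n → F)) (hk : Module.finrank F C = k) (hd : IsMinDist C d)
    (H : Matrix (Fin mrows) (Fin n) F)
    (hH : Submodule.span F (Set.range fun i => H i) = dualCode C)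
    (S : Finset (Fin n)) (hS : S.card ≤ d - 1) :
    (Submodule.span F (Set.range fun i => (subMat H S) i) =
        dualCode (C.map (LinearMap.funLeft F F (fun j : {j : Fin n // j ∉ S} => j.1)))) ↔
      (subMat H S).rank = n - k - S.card := by
  have hweight : ∀ c ∈ C, c ≠ 0 → S.card < hammingNorm c := fun c hc hc0 => by
    have := hd.1 c hc hc0
    have := hammingNorm_pos_iff.mpr hc0
    omega
  have hdual : Module.finrank F
      (dualCode (C.map (LinearMap.funLeft F F (fun j : {j : Fin n // j ∉ S} => j.1)))) =
        n - k - S.card := by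
    rw [finrank_dualCode, finrank_map_funLeft_of_card_lt_hammingNorm hweight, hk,
      Fintype.card_subtype_compl, Fintype.card_fin, Fintype.card_coe]
    omega
  rw [Matrix.rank_eq_finrank_span_row, ← hdual]
  exact ⟨fun h => h ▸ rfl, Submodule.eq_of_le_of_finrank_eq (span_subMat_le_dualCode_map hH.le S)⟩
end

section
/- Let f_q(a,b) = Σ_{i=0}^{a} (-1)^i binomial(a,i) ∏_{j=0}^{b-1}(q^{a-i} - q^j). For b ≤ a, the number of a×b matrices over F_q of rank b containing no all-zero row equals f_q(a,b). -/
open Finset Matrix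

set_option linter.unusedSectionVars false
set_option maxHeartbeats 1000000

section
variable {F : Type} [Field F] [Fintype F] [DecidableEq F]

lemma rank_eq_iff_li {ι : Type} [Fintype ι] {b : ℕ} (M : Matrix ι (Fin b) F) :
    M.rank = b ↔ LinearIndependent F Mᵀ := by
  rw [Matrix.rank_eq_finrank_span_cols]
  change _ ↔ LinearIndependent F M.col
  rw [linearIndependent_iff_card_eq_finrank_span,
    Fintype.card_fin, Set.finrank, eq_comm]

lemma li_card_le {ι : Type} [Fintype ι] {b : ℕ} {s : Fin b → ι → F}
    (h : LinearIndependent F s) : b ≤ Fintype.card ι := by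
  have := h.fintype_card_le_finrank
  simpa [Module.finrank_fintype_fun_eq_card] using this

lemma count_full_rank {ι : Type} [Fintype ι] [DecidableEq ι] {b : ℕ} (hb : b ≤ Fintype.card ι) :
    Nat.card {M : Matrix ι (Fin b) F // M.rank = b} =
      ∏ j ∈ range b, (Fintype.card F ^ Fintype.card ι - Fintype.card F ^ j) := by
  have e : {M : Matrix ι (Fin b) F // M.rank = b} ≃
      {s : Fin b → ι → F // LinearIndependent F s} :=
    { toFun := fun M => ⟨M.1ᵀ, (rank_eq_iff_li M.1).1 M.2⟩
      invFun := fun s => ⟨(s.1 : Matrix (Fin b) ι F)ᵀ, by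
        rw [rank_eq_iff_li]; exact s.2⟩
      left_inv := fun M => by simp
      right_inv := fun s => by rfl }
  rw [Nat.card_congr e, card_linearIndependent (by simpa [Module.finrank_fintype_fun_eq_card]),
    Module.finrank_fintype_fun_eq_card]
  exact Fin.prod_univ_eq_prod_range (fun j => Fintype.card F ^ Fintype.card ι - Fintype.card F ^ j) b

lemma li_restrict {κ : Type} {a : ℕ} (T : Finset (Fin a)) (v : κ → Fin a → F)
    (hv : ∀ j, ∀ i ∈ T, v j i = 0) :
    LinearIndependent F v ↔ LinearIndependent F (fun j (i : {i : Fin a // i ∉ T}) => v j i.1) := by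
  constructor <;> intro h <;> rw [linearIndependent_iff'] at h ⊢ <;>
    intro s g hs j hj
  · refine h s g ?_ j hj
    funext i
    by_cases hi : i ∈ T
    · simp [hv _ _ hi]
    · have := congrFun hs ⟨i, hi⟩
      simpa using this
  · refine h s g ?_ j hj
    funext i
    have := congrFun hs i.1
    simpa using this

/-- equivalence deleting the zero rows indexed by `T` -/
noncomputable def zeroRowsEquiv {a b : ℕ} (T : Finset (Fin a)) :
    {M : Matrix (Fin a) (Fin b) F // M.rank = b ∧ ∀ i ∈ T, M i = 0} ≃
      {N : Matrix {i : Fin a // i ∉ T} (Fin b) F // N.rank = b} where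
  toFun M := ⟨fun i j => M.1 i.1 j, by
    refine (rank_eq_iff_li _).2 ?_
    have h0 : ∀ j, ∀ i ∈ T, M.1ᵀ j i = 0 := fun j i hi => by
      simp [Matrix.transpose_apply, congrFun (M.2.2 i hi) j]
    exact (li_restrict T M.1ᵀ h0).1 ((rank_eq_iff_li M.1).1 M.2.1)⟩
  invFun N := ⟨fun i j => if h : i ∉ T then N.1 ⟨i, h⟩ j else 0, by
    constructor
    · refine (rank_eq_iff_li _).2 ?_
      have h0 : ∀ j, ∀ i ∈ T,
          (fun i j => if h : i ∉ T then N.1 ⟨i, h⟩ j else 0 : Matrix (Fin a) (Fin b) F)ᵀ j i = 0 :=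
        fun j i hi => by
          show (if h : i ∉ T then N.1 ⟨i, h⟩ j else 0) = 0; simp [hi]
      rw [li_restrict T _ h0]
      have := (rank_eq_iff_li N.1).1 N.2
      have e : (fun j (i : {i : Fin a // i ∉ T}) => (if h : i.1 ∉ T then N.1 ⟨i.1, h⟩ j else 0 : F))
          = fun j i => N.1 i j := by
        funext j i
        simp [i.2]
      change LinearIndependent F
        (fun j (i : {i : Fin a // i ∉ T}) => (if h : i.1 ∉ T then N.1 ⟨i.1, h⟩ j else 0 : F))
      rw [e]
      exact this
    · intro i hi
      funext j
      simp [hi]⟩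
  left_inv M := by
    apply Subtype.ext
    funext i j
    by_cases hi : i ∈ T
    · simp [hi, congrFun (M.2.2 i hi) j]
    · simp [hi]
  right_inv N := by
    apply Subtype.ext
    funext i j
    simp [i.2]

lemma card_compl_subtype {a : ℕ} (T : Finset (Fin a)) :
    Fintype.card {i : Fin a // i ∉ T} = a - T.card := by
  rw [Fintype.card_subtype_compl]
  simp

/-- value of N(T) as an integer -/
lemma count_zero_rows {a b : ℕ} (T : Finset (Fin a)) :
    (Nat.card {M : Matrix (Fin a) (Fin b) F // M.rank = b ∧ ∀ i ∈ T, M i = 0} : ℤ) =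
      ∏ j ∈ range b, ((Fintype.card F : ℤ) ^ (a - T.card) - (Fintype.card F : ℤ) ^ j) := by
  rw [Nat.card_congr (zeroRowsEquiv T)]
  by_cases hb : b ≤ a - T.card
  · rw [count_full_rank (by rwa [card_compl_subtype]), Nat.cast_prod]
    refine Finset.prod_congr rfl fun j hj => ?_
    rw [card_compl_subtype, Nat.cast_sub (Nat.pow_le_pow_right Fintype.card_pos
      (le_trans (Nat.lt_of_lt_of_le (mem_range.1 hj) hb).le le_rfl))]
    push_cast
    ring
  · have h1 : IsEmpty {N : Matrix {i : Fin a // i ∉ T} (Fin b) F // N.rank = b} := by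
      constructor
      rintro ⟨N, hN⟩
      exact hb (le_trans (li_card_le ((rank_eq_iff_li N).1 hN)) (card_compl_subtype T).le)
    rw [Nat.card_of_isEmpty]
    rw [eq_comm]
    refine Finset.prod_eq_zero (mem_range.2 (Nat.lt_of_not_le hb)) ?_
    ring

end

/-- For `b ≤ a`, the number of `a × b` matrices over `F_q` of rank `b` with no all-zero row
equals `f_q(a,b) = Σ_{i=0}^{a} (-1)^i C(a,i) ∏_{j=0}^{b-1}(q^{a-i} - q^j)`. -/
theorem stmt_6 {F : Type} [Field F] [Fintype F] [DecidableEq F] (a b q : ℕ)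
    (hq : q = Fintype.card F) (hba : b ≤ a) :
    (Nat.card {M : Matrix (Fin a) (Fin b) F // M.rank = b ∧ ∀ i, M i ≠ 0} : ℤ) =
      ∑ i ∈ Finset.range (a + 1), (-1 : ℤ) ^ i * (a.choose i : ℤ) *
        ∏ j ∈ Finset.range b, ((q : ℤ) ^ (a - i) - (q : ℤ) ^ j) := by
  classical
  subst hq
  set P : ℕ → ℤ := fun i =>
    ∏ j ∈ range b, ((Fintype.card F : ℤ) ^ (a - i) - (Fintype.card F : ℤ) ^ j) with hP
  -- step 1: RHS as sum over subsets
  have step1 : ∑ i ∈ Finset.range (a + 1), (-1 : ℤ) ^ i * (a.choose i : ℤ) * P i =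
      ∑ T ∈ (Finset.univ : Finset (Fin a)).powerset, (-1 : ℤ) ^ T.card * P T.card := by
    rw [Finset.sum_powerset_apply_card (fun i => (-1 : ℤ) ^ i * P i)]
    simp only [card_univ, Fintype.card_fin, nsmul_eq_mul]
    refine Finset.sum_congr rfl fun i _ => ?_
    ring
  rw [step1]
  -- step 2: N(T) values
  have hN : ∀ T : Finset (Fin a),
      ((Finset.univ.filter
        (fun M : Matrix (Fin a) (Fin b) F => M.rank = b ∧ ∀ i ∈ T, M i = 0)).card : ℤ)
        = P T.card := by
    intro T
    simp only [hP]
    rw [← count_zero_rows T, ← Fintype.card_subtype, Nat.card_eq_fintype_card]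
  -- zero-row set
  set R : Finset (Matrix (Fin a) (Fin b) F) :=
    Finset.univ.filter (fun M => M.rank = b) with hR
  set Z : Matrix (Fin a) (Fin b) F → Finset (Fin a) :=
    fun M => Finset.univ.filter (fun i => M i = 0) with hZ
  have key : ∀ T : Finset (Fin a),
      ((Finset.univ.filter
        (fun M : Matrix (Fin a) (Fin b) F => M.rank = b ∧ ∀ i ∈ T, M i = 0)).card : ℤ)
        = ∑ M ∈ R, (if T ⊆ Z M then (1 : ℤ) else 0) := by
    intro T
    rw [← Finset.filter_filter, Finset.card_filter, Nat.cast_sum]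
    refine Finset.sum_congr rfl fun M _ => ?_
    have : (∀ i ∈ T, M i = 0) ↔ T ⊆ Z M := by
      simp [hZ, Finset.subset_iff]
    simp [this]
  calc (Nat.card {M : Matrix (Fin a) (Fin b) F // M.rank = b ∧ ∀ i, M i ≠ 0} : ℤ)
      = ((Finset.univ.filter
          (fun M : Matrix (Fin a) (Fin b) F => M.rank = b ∧ ∀ i, M i ≠ 0)).card : ℤ) := by
        rw [← Fintype.card_subtype, Nat.card_eq_fintype_card]
    _ = ∑ M ∈ R, (if Z M = ∅ then (1 : ℤ) else 0) := by
        rw [← Finset.filter_filter, Finset.card_filter, Nat.cast_sum]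
        refine Finset.sum_congr rfl fun M _ => ?_
        have : (∀ i, M i ≠ 0) ↔ Z M = ∅ := by
          simp [hZ, Finset.filter_eq_empty_iff]
        simp [this]
    _ = ∑ M ∈ R, ∑ T ∈ (Z M).powerset, (-1 : ℤ) ^ T.card := by
        refine Finset.sum_congr rfl fun M _ => ?_
        rw [Finset.sum_powerset_neg_one_pow_card]
    _ = ∑ M ∈ R, ∑ T ∈ (Finset.univ : Finset (Fin a)).powerset,
          (-1 : ℤ) ^ T.card * (if T ⊆ Z M then (1 : ℤ) else 0) := by
        refine Finset.sum_congr rfl fun M _ => ?_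
        rw [eq_comm]
        simp only [mul_ite, mul_one, mul_zero]
        have hps : (Z M).powerset =
            (Finset.univ : Finset (Fin a)).powerset.filter (fun x => x ⊆ Z M) := by
          ext x
          simp [Finset.mem_powerset, Finset.subset_univ]
        rw [hps, Finset.sum_filter]
    _ = ∑ T ∈ (Finset.univ : Finset (Fin a)).powerset, (-1 : ℤ) ^ T.card * P T.card := by
        rw [Finset.sum_comm]
        refine Finset.sum_congr rfl fun T _ => ?_
        rw [← hN T, key T, Finset.mul_sum]
end

section
/- Let E be a v-dimensional subspace of F_q^u and let M be a t×u matrix whose rows are drawn independently and uniformly at random from E \ {0}. For 0 ≤ r ≤ v, the probability that M has rank r equals [v choose r]_q · f_q(t,r) / (q^v - 1)^t, where f_q(t,r) = Σ_{i=0}^{t} (-1)^i binomial(t,i) ∏_{j=0}^{r-1}(q^{t-i} - q^j). -/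
set_option linter.unusedSectionVars false
set_option maxHeartbeats 1000000
set_option synthInstance.maxHeartbeats 400000
open Finset Submodule Module
section Aux
variable {F : Type} [Field F] [Fintype F] [DecidableEq F]
variable {V : Type} [AddCommGroup V] [Module F V]

lemma aux_span_coe {t : ℕ} (W : Submodule F V) (g : Fin t → W) :
    Submodule.span F (Set.range fun i => (g i : V)) =
      (Submodule.span F (Set.range g)).map W.subtype := by
  rw [Submodule.map_span]
  congr 1
  rw [← Set.range_comp]
  rfl

/-- restriction equiv with nonzero + span condition -/
def auxRestrict {t : ℕ} (W : Submodule F V) :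
    {f : Fin t → V // (∀ i, f i ≠ 0) ∧ Submodule.span F (Set.range f) = W} ≃
      {g : Fin t → W // (∀ i, g i ≠ 0) ∧ Submodule.span F (Set.range g) = ⊤} where
  toFun f := ⟨fun i => ⟨f.1 i, f.2.2.le (Submodule.subset_span ⟨i, rfl⟩)⟩, by
    refine ⟨fun i h => f.2.1 i (congrArg Subtype.val h), ?_⟩
    apply Submodule.map_injective_of_injective W.injective_subtype
    rw [← aux_span_coe, Submodule.map_top, Submodule.range_subtype]
    exact f.2.2⟩
  invFun g := ⟨fun i => (g.1 i : V), by
    refine ⟨fun i h => g.2.1 i (Subtype.ext h), ?_⟩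
    rw [aux_span_coe, g.2.2, Submodule.map_top, Submodule.range_subtype]⟩
  left_inv f := Subtype.ext (funext fun i => rfl)
  right_inv g := Subtype.ext (funext fun i => Subtype.ext rfl)

/-- restriction equiv with linear independence + span condition -/
def auxRestrictIndep {k : ℕ} (W : Submodule F V) :
    {f : Fin k → V // LinearIndependent F f ∧ Submodule.span F (Set.range f) = W} ≃
      {g : Fin k → W // LinearIndependent F g ∧ Submodule.span F (Set.range g) = ⊤} where
  toFun f := ⟨fun i => ⟨f.1 i, f.2.2.le (Submodule.subset_span ⟨i, rfl⟩)⟩, by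
    constructor
    · exact (LinearIndependent.of_comp W.subtype (by exact f.2.1))
    · apply Submodule.map_injective_of_injective W.injective_subtype
      rw [← aux_span_coe, Submodule.map_top, Submodule.range_subtype]
      exact f.2.2⟩
  invFun g := ⟨fun i => (g.1 i : V), by
    constructor
    · exact g.2.1.map' W.subtype W.ker_subtype
    · rw [aux_span_coe, g.2.2, Submodule.map_top, Submodule.range_subtype]⟩
  left_inv f := Subtype.ext (funext fun i => rfl)
  right_inv g := Subtype.ext (funext fun i => Subtype.ext rfl)

lemma aux_span_top_iff_indep {s m : ℕ} (g : Fin s → Fin m → F) :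
    Submodule.span F (Set.range g) = ⊤ ↔ LinearIndependent F (fun j i => g i j) := by
  have h1 : Matrix.rank (Matrix.of g : Matrix (Fin s) (Fin m) F)
      = finrank F (Submodule.span F (Set.range g)) :=
    Matrix.rank_eq_finrank_span_row _
  have h2 : Matrix.rank (Matrix.transpose (Matrix.of g : Matrix (Fin s) (Fin m) F))
      = finrank F (Submodule.span F (Set.range (fun j i => g i j))) :=
    Matrix.rank_eq_finrank_span_row _
  rw [Matrix.rank_transpose] at h2
  rw [linearIndependent_iff_card_eq_finrank_span]
  unfold Set.finrank
  rw [Fintype.card_fin, ← h2, h1]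
  constructor
  · intro h
    rw [h, finrank_top, Module.finrank_fintype_fun_eq_card, Fintype.card_fin]
  · intro h
    apply Submodule.eq_top_of_finrank_eq
    rw [← h, Module.finrank_fintype_fun_eq_card, Fintype.card_fin]

lemma aux_span_card_model (s m : ℕ) (hm : m ≤ s) :
    Nat.card {g : Fin s → Fin m → F // Submodule.span F (Set.range g) = ⊤} =
      ∏ j ∈ Finset.range m, (Fintype.card F ^ s - Fintype.card F ^ j) := by
  have e : {g : Fin s → Fin m → F // Submodule.span F (Set.range g) = ⊤} ≃
      {h : Fin m → Fin s → F // LinearIndependent F h} :=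
    { toFun := fun g => ⟨fun j i => g.1 i j, (aux_span_top_iff_indep g.1).mp g.2⟩
      invFun := fun h => ⟨fun i j => h.1 j i, (aux_span_top_iff_indep _).mpr h.2⟩
      left_inv := fun g => rfl
      right_inv := fun h => rfl }
  have hk : m ≤ finrank F (Fin s → F) := by
    rw [Module.finrank_fintype_fun_eq_card, Fintype.card_fin]; exact hm
  rw [Nat.card_congr e, card_linearIndependent (K := F) (V := Fin s → F) hk]
  rw [Module.finrank_fintype_fun_eq_card, Fintype.card_fin]
  exact Fin.prod_univ_eq_prod_range (fun j => Fintype.card F ^ s - Fintype.card F ^ j) m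

/-- reindexing spanning tuples -/
def auxReindex {ι ι' : Type} (e : ι ≃ ι') :
    {g : ι' → V // Submodule.span F (Set.range g) = ⊤} ≃
      {g : ι → V // Submodule.span F (Set.range g) = ⊤} where
  toFun g := ⟨g.1 ∘ e, by rw [Set.range_comp, Equiv.range_eq_univ, Set.image_univ]; exact g.2⟩
  invFun g := ⟨g.1 ∘ e.symm, by
    rw [Set.range_comp, Equiv.range_eq_univ, Set.image_univ]; exact g.2⟩
  left_inv g := Subtype.ext (funext fun i => by simp)
  right_inv g := Subtype.ext (funext fun i => by simp)

/-- transporting spanning tuples along a linear equivalence -/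
def auxTransport {V' : Type} [AddCommGroup V'] [Module F V'] (e : V ≃ₗ[F] V') (s : ℕ) :
    {g : Fin s → V // Submodule.span F (Set.range g) = ⊤} ≃
      {g : Fin s → V' // Submodule.span F (Set.range g) = ⊤} where
  toFun g := ⟨fun i => e (g.1 i), by
    have h : Set.range (fun i => e (g.1 i)) = e.toLinearMap '' (Set.range g.1) := by
      rw [← Set.range_comp]; rfl
    rw [h, ← Submodule.map_span, g.2, Submodule.map_top, LinearEquiv.range]⟩
  invFun g := ⟨fun i => e.symm (g.1 i), by
    have h : Set.range (fun i => e.symm (g.1 i)) = e.symm.toLinearMap '' (Set.range g.1) := by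
      rw [← Set.range_comp]; rfl
    rw [h, ← Submodule.map_span, g.2, Submodule.map_top, LinearEquiv.range]⟩
  left_inv g := Subtype.ext (funext fun i => by simp)
  right_inv g := Subtype.ext (funext fun i => by simp)

lemma aux_span_card [Finite V] {m : ℕ} (hV : Module.finrank F V = m) (s : ℕ) :
    Nat.card {g : Fin s → V // Submodule.span F (Set.range g) = ⊤} =
      ∏ j ∈ Finset.range m, (Fintype.card F ^ s - Fintype.card F ^ j) := by
  have : Module.Finite F V := Module.Finite.of_finite
  by_cases hm : m ≤ s
  · obtain ⟨e⟩ : Nonempty (V ≃ₗ[F] (Fin m → F)) :=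
      FiniteDimensional.nonempty_linearEquiv_of_finrank_eq
        (by rw [hV, Module.finrank_fintype_fun_eq_card, Fintype.card_fin])
    rw [Nat.card_congr (auxTransport e s), aux_span_card_model s m hm]
  · push_neg at hm
    have hempty : IsEmpty {g : Fin s → V // Submodule.span F (Set.range g) = ⊤} := by
      constructor
      rintro ⟨g, hg⟩
      have h1 : finrank F (Submodule.span F (Set.range g)) ≤ s := by
        simpa [Set.finrank] using finrank_range_le_card g
      rw [hg, finrank_top, hV] at h1
      omega
    rw [Nat.card_of_isEmpty]
    symm
    apply Finset.prod_eq_zero (Finset.mem_range.mpr hm)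
    omega

/-- tuples vanishing on `T` and spanning, vs tuples on the complement spanning -/
def auxZeroset {t : ℕ} (T : Finset (Fin t)) :
    {g : Fin t → V // Submodule.span F (Set.range g) = ⊤ ∧ ∀ i ∈ T, g i = 0} ≃
      {h : {i : Fin t // i ∈ Tᶜ} → V // Submodule.span F (Set.range h) = ⊤} where
  toFun g := ⟨fun i => g.1 i.1, by
    have hle : Submodule.span F (Set.range fun i : {i : Fin t // i ∈ Tᶜ} => g.1 i.1) =
        Submodule.span F (Set.range g.1) := by
      apply le_antisymm
      · apply Submodule.span_mono
        rintro x ⟨i, rfl⟩; exact ⟨i.1, rfl⟩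
      · rw [Submodule.span_le]
        rintro x ⟨i, rfl⟩
        by_cases hi : i ∈ T
        · rw [g.2.2 i hi]; exact Submodule.zero_mem _
        · exact Submodule.subset_span ⟨⟨i, Finset.mem_compl.mpr hi⟩, rfl⟩
    rw [hle, g.2.1]⟩
  invFun h := ⟨fun i => if hi : i ∈ Tᶜ then h.1 ⟨i, hi⟩ else 0, by
    constructor
    · have hle : Submodule.span F (Set.range h.1) ≤
          Submodule.span F (Set.range fun i : Fin t =>
            if hi : i ∈ Tᶜ then h.1 ⟨i, hi⟩ else 0) := by
        rw [Submodule.span_le]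
        rintro x ⟨i, rfl⟩
        apply Submodule.subset_span
        exact ⟨i.1, by simp [i.2]⟩
      rw [h.2] at hle
      exact top_le_iff.mp hle
    · intro i hi
      simp [Finset.mem_compl, hi]⟩
  left_inv g := Subtype.ext (funext fun i => by
    by_cases hi : i ∈ T
    · simp [Finset.mem_compl, hi, g.2.2 i hi]
    · simp [Finset.mem_compl, hi])
  right_inv h := Subtype.ext (funext fun i => by simp [i.2])

lemma aux_zeroset_card [Finite V] {m : ℕ} (hV : Module.finrank F V = m) {t : ℕ}
    (T : Finset (Fin t)) :
    Nat.card {g : Fin t → V // Submodule.span F (Set.range g) = ⊤ ∧ ∀ i ∈ T, g i = 0} =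
      ∏ j ∈ Finset.range m, (Fintype.card F ^ (t - T.card) - Fintype.card F ^ j) := by
  have e2 : {i : Fin t // i ∈ Tᶜ} ≃ Fin (t - T.card) :=
    (Tᶜ.equivFin).trans (finCongr (by rw [Finset.card_compl, Fintype.card_fin]))
  rw [Nat.card_congr ((auxZeroset T).trans (auxReindex e2.symm))]
  exact aux_span_card hV _
lemma aux_mem_inf {ι α : Type*} [DecidableEq α] [Fintype α] {s : Finset ι}
    {f : ι → Finset α} {a : α} : a ∈ s.inf f ↔ ∀ i ∈ s, a ∈ f i := by
  induction s using Finset.cons_induction with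
  | empty => simp
  | cons i s hi ih => simp [Finset.inf_cons, ih]

lemma aux_cast_prod {q : ℕ} (hq : 1 ≤ q) (r s : ℕ) :
    ((∏ j ∈ Finset.range r, (q ^ s - q ^ j) : ℕ) : ℤ) =
      ∏ j ∈ Finset.range r, ((q : ℤ) ^ s - (q : ℤ) ^ j) := by
  by_cases hrs : r ≤ s
  · rw [Nat.cast_prod]
    apply Finset.prod_congr rfl
    intro j hj
    rw [Finset.mem_range] at hj
    rw [Nat.cast_sub (Nat.pow_le_pow_right hq (by omega))]
    push_cast
    ring
  · have hs : s < r := lt_of_not_ge hrs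
    rw [Finset.prod_eq_zero (Finset.mem_range.mpr hs) (Nat.sub_self (q ^ s)),
      Finset.prod_eq_zero (Finset.mem_range.mpr hs) (sub_self ((q : ℤ) ^ s)), Nat.cast_zero]

lemma aux_nonzero_span_card [Finite V] {r : ℕ} (hV : Module.finrank F V = r) (t : ℕ) :
    (Nat.card {g : Fin t → V // (∀ i, g i ≠ 0) ∧ Submodule.span F (Set.range g) = ⊤} : ℤ) =
      ∑ i ∈ Finset.range (t + 1), (-1 : ℤ) ^ i * (t.choose i : ℤ) *
        ∏ j ∈ Finset.range r, ((Fintype.card F : ℤ) ^ (t - i) - (Fintype.card F : ℤ) ^ j) := by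
  classical
  cases nonempty_fintype V
  have IE := Finset.inclusion_exclusion_card_inf_compl (Finset.univ : Finset (Fin t))
    (fun i => Finset.univ.filter
      (fun g : {g : Fin t → V // Submodule.span F (Set.range g) = ⊤} => g.1 i = 0))
  have hL : ((Finset.univ : Finset (Fin t)).inf fun i => (Finset.univ.filter
        (fun g : {g : Fin t → V // Submodule.span F (Set.range g) = ⊤} => g.1 i = 0))ᶜ)
      = Finset.univ.filter
        (fun g : {g : Fin t → V // Submodule.span F (Set.range g) = ⊤} => ∀ i, g.1 i ≠ 0) := by
    ext a
    simp [aux_mem_inf]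
  have hcard : Nat.card {g : Fin t → V // (∀ i, g i ≠ 0) ∧
      Submodule.span F (Set.range g) = ⊤} = (Finset.univ.filter
        (fun g : {g : Fin t → V // Submodule.span F (Set.range g) = ⊤} =>
          ∀ i, g.1 i ≠ 0)).card := by
    rw [← Fintype.card_subtype, ← Nat.card_eq_fintype_card]
    refine Nat.card_congr ?_
    exact (Equiv.subtypeEquivRight (fun g => and_comm)).trans
      (Equiv.subtypeSubtypeEquivSubtypeInter
        (fun g : Fin t → V => Submodule.span F (Set.range g) = ⊤)
        (fun g => ∀ i, g i ≠ 0)).symm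
  have hR : ∀ T : Finset (Fin t), ((T.inf fun i => Finset.univ.filter
      (fun g : {g : Fin t → V // Submodule.span F (Set.range g) = ⊤} => g.1 i = 0)).card : ℤ)
      = ((∏ j ∈ Finset.range r,
          (Fintype.card F ^ (t - T.card) - Fintype.card F ^ j) : ℕ) : ℤ) := by
    intro T
    congr 1
    have h1 : (T.inf fun i => Finset.univ.filter
        (fun g : {g : Fin t → V // Submodule.span F (Set.range g) = ⊤} => g.1 i = 0))
        = Finset.univ.filter
          (fun g : {g : Fin t → V // Submodule.span F (Set.range g) = ⊤} =>
            ∀ i ∈ T, g.1 i = 0) := by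
      ext a
      simp [aux_mem_inf]
    rw [h1, ← Fintype.card_subtype, ← Nat.card_eq_fintype_card,
      Nat.card_congr (Equiv.subtypeSubtypeEquivSubtypeInter
        (fun g : Fin t → V => Submodule.span F (Set.range g) = ⊤)
        (fun g => ∀ i ∈ T, g i = 0)),
      aux_zeroset_card hV T]
  rw [hL] at IE
  rw [hcard, IE]
  rw [Finset.sum_congr rfl (fun T _ => by rw [hR T])]
  rw [Finset.sum_powerset_apply_card
    (fun i => (-1 : ℤ) ^ i * ((∏ j ∈ Finset.range r,
      (Fintype.card F ^ (t - i) - Fintype.card F ^ j) : ℕ) : ℤ))]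
  rw [Finset.card_univ, Fintype.card_fin]
  apply Finset.sum_congr rfl
  intro i _
  rw [aux_cast_prod Fintype.card_pos]
  push_cast
  ring
lemma aux_card_fiber_sum {α β : Type*} [Finite α] [Fintype β] (f : α → β) :
    Nat.card α = ∑ b : β, Nat.card {a : α // f a = b} := by
  classical
  cases nonempty_fintype α
  rw [Nat.card_eq_fintype_card]
  calc Fintype.card α = Fintype.card (Σ b : β, {a : α // f a = b}) :=
        Fintype.card_congr (Equiv.sigmaFiberEquiv f).symm
    _ = ∑ b : β, Fintype.card {a : α // f a = b} := Fintype.card_sigma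
    _ = ∑ b : β, Nat.card {a : α // f a = b} := by
        simp [Nat.card_eq_fintype_card]

lemma aux_indep_iff_span_top [Finite V] {k : ℕ} (W : Submodule F V)
    (hW : Module.finrank F W = k) (g : Fin k → W) :
    LinearIndependent F g ↔ Submodule.span F (Set.range g) = ⊤ := by
  have : Module.Finite F W := Module.Finite.of_finite
  constructor
  · intro h
    exact h.span_eq_top_of_card_eq_finrank' (by rw [Fintype.card_fin, hW])
  · intro h
    rw [linearIndependent_iff_card_eq_finrank_span]
    unfold Set.finrank
    rw [Fintype.card_fin, h, finrank_top, hW]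

lemma aux_grassmann [Finite V] {v r : ℕ} (hv : Module.finrank F V = v) (hr : r ≤ v) :
    Nat.card {W : Submodule F V // Module.finrank F W = r} *
      ∏ j ∈ Finset.range r, (Fintype.card F ^ r - Fintype.card F ^ j) =
    ∏ j ∈ Finset.range r, (Fintype.card F ^ v - Fintype.card F ^ j) := by
  classical
  have hfin : Finite (Submodule F V) :=
    Finite.of_injective (fun W : Submodule F V => (W : Set V)) SetLike.coe_injective
  cases nonempty_fintype {W : Submodule F V // Module.finrank F W = r}
  have h3 : Nat.card {s : Fin r → V // LinearIndependent F s} =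
      ∏ j ∈ Finset.range r, (Fintype.card F ^ v - Fintype.card F ^ j) := by
    rw [card_linearIndependent (K := F) (V := V) (k := r) (by rw [hv]; exact hr), hv]
    exact Fin.prod_univ_eq_prod_range (fun j => Fintype.card F ^ v - Fintype.card F ^ j) r
  set f : {s : Fin r → V // LinearIndependent F s} →
      {W : Submodule F V // Module.finrank F W = r} :=
    fun s => ⟨Submodule.span F (Set.range s.1), by
      rw [finrank_span_eq_card s.2, Fintype.card_fin]⟩ with hf
  have h2 : ∀ b : {W : Submodule F V // Module.finrank F W = r},
      Nat.card {a : {s : Fin r → V // LinearIndependent F s} // f a = b} =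
        ∏ j ∈ Finset.range r, (Fintype.card F ^ r - Fintype.card F ^ j) := by
    intro b
    have e : {a : {s : Fin r → V // LinearIndependent F s} // f a = b} ≃
        {g : Fin r → b.1 // LinearIndependent F g} :=
      ((Equiv.subtypeEquivRight (fun a => by
          rw [hf, Subtype.ext_iff])).trans
        ((Equiv.subtypeSubtypeEquivSubtypeInter
          (fun s : Fin r → V => LinearIndependent F s)
          (fun s => Submodule.span F (Set.range s) = b.1)).trans
        ((auxRestrictIndep b.1).trans
          (Equiv.subtypeEquivRight (fun g =>
            ⟨And.left, fun h => ⟨h, (aux_indep_iff_span_top b.1 b.2 g).mp h⟩⟩)))))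
    rw [Nat.card_congr e, card_linearIndependent (K := F) (V := b.1) (k := r)
      (by rw [b.2]), b.2]
    exact Fin.prod_univ_eq_prod_range (fun j => Fintype.card F ^ r - Fintype.card F ^ j) r
  rw [← h3, aux_card_fiber_sum f, Finset.sum_congr rfl (fun b _ => h2 b),
    Finset.sum_const, smul_eq_mul, Nat.card_eq_fintype_card, Finset.card_univ]
lemma aux_cast_prodQ {q : ℕ} (hq : 1 ≤ q) (r s : ℕ) :
    ((∏ j ∈ Finset.range r, (q ^ s - q ^ j) : ℕ) : ℚ) =
      ∏ j ∈ Finset.range r, ((q : ℚ) ^ s - (q : ℚ) ^ j) := by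
  by_cases hrs : r ≤ s
  · rw [Nat.cast_prod]
    apply Finset.prod_congr rfl
    intro j hj
    rw [Finset.mem_range] at hj
    rw [Nat.cast_sub (Nat.pow_le_pow_right hq (by omega))]
    push_cast
    ring
  · have hs : s < r := lt_of_not_ge hrs
    rw [Finset.prod_eq_zero (Finset.mem_range.mpr hs) (Nat.sub_self (q ^ s)),
      Finset.prod_eq_zero (Finset.mem_range.mpr hs) (sub_self ((q : ℚ) ^ s)), Nat.cast_zero]

lemma aux_rank_eq {u t : ℕ} (M : Fin t → Fin u → F) :
    (Matrix.of fun i j => M i j : Matrix (Fin t) (Fin u) F).rank =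
      Module.finrank F (Submodule.span F (Set.range M)) := by
  rw [Matrix.rank_eq_finrank_span_row]
  rfl

end Aux

/-- Probability that a `t × u` matrix with rows drawn independently and uniformly at random
from `E \ {0}`, `E` a `v`-dimensional subspace of `F_q^u`, has rank `r`. -/
theorem stmt_7 {F : Type} [Field F] [Fintype F] [DecidableEq F] (u v t r q : ℕ)
    (E : Submodule F (Fin u → F)) (hv : Module.finrank F E = v)
    (hr : r ≤ v) (hq : q = Fintype.card F) :
    (Nat.card {M : Fin t → (Fin u → F) //
          (∀ i, M i ∈ E ∧ M i ≠ 0) ∧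
            (Matrix.of fun i j => M i j : Matrix (Fin t) (Fin u) F).rank = r} : ℚ) /
        ((q : ℚ) ^ v - 1) ^ t =
      (∏ i ∈ Finset.range r, ((q : ℚ) ^ (v - i) - 1) / ((q : ℚ) ^ (i + 1) - 1)) *
          (∑ i ∈ Finset.range (t + 1), (-1 : ℚ) ^ i * (t.choose i : ℚ) *
            ∏ j ∈ Finset.range r, ((q : ℚ) ^ (t - i) - (q : ℚ) ^ j)) /
        ((q : ℚ) ^ v - 1) ^ t := by
  classical
  subst hq
  set q : ℕ := Fintype.card F with hqdef
  have hq2 : 2 ≤ q := Fintype.one_lt_card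
  have hq1 : 1 ≤ q := by omega
  set Q : ℚ := (q : ℚ) with hQ
  have hQ2 : (2 : ℚ) ≤ Q := by rw [hQ]; exact_mod_cast hq2
  set fsum : ℚ := ∑ i ∈ Finset.range (t + 1), (-1 : ℚ) ^ i * (t.choose i : ℚ) *
      ∏ j ∈ Finset.range r, (Q ^ (t - i) - Q ^ j) with hfsum
  set Gq : ℚ := ∏ i ∈ Finset.range r, (Q ^ (v - i) - 1) / (Q ^ (i + 1) - 1) with hGq
  suffices hnum : (Nat.card {M : Fin t → (Fin u → F) //
      (∀ i, M i ∈ E ∧ M i ≠ 0) ∧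
        (Matrix.of fun i j => M i j : Matrix (Fin t) (Fin u) F).rank = r} : ℚ) = Gq * fsum by
    rw [hnum]
  -- the fibering map to subspaces
  have hfinsub : Finite (Submodule F (Fin u → F)) :=
    Finite.of_injective (fun W : Submodule F (Fin u → F) => (W : Set (Fin u → F)))
      SetLike.coe_injective
  cases nonempty_fintype {W : Submodule F (Fin u → F) // W ≤ E ∧ Module.finrank F W = r}
  set S := {M : Fin t → (Fin u → F) //
      (∀ i, M i ∈ E ∧ M i ≠ 0) ∧
        (Matrix.of fun i j => M i j : Matrix (Fin t) (Fin u) F).rank = r} with hS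
  set β := {W : Submodule F (Fin u → F) // W ≤ E ∧ Module.finrank F W = r} with hβ
  set f : S → β := fun M => ⟨Submodule.span F (Set.range M.1), by
      rw [Submodule.span_le]
      rintro x ⟨i, rfl⟩
      exact (M.2.1 i).1, by
      rw [← aux_rank_eq M.1]
      exact M.2.2⟩ with hfdef
  -- each fiber has cardinality fsum
  have h2 : ∀ b : β, (Nat.card {a : S // f a = b} : ℚ) = fsum := by
    intro b
    have e : {a : S // f a = b} ≃
        {g : Fin t → b.1 // (∀ i, g i ≠ 0) ∧ Submodule.span F (Set.range g) = ⊤} :=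
      ((Equiv.subtypeEquivRight (fun a => by rw [hfdef, Subtype.ext_iff])).trans
        ((Equiv.subtypeSubtypeEquivSubtypeInter
          (fun M : Fin t → (Fin u → F) => (∀ i, M i ∈ E ∧ M i ≠ 0) ∧
            (Matrix.of fun i j => M i j : Matrix (Fin t) (Fin u) F).rank = r)
          (fun M => Submodule.span F (Set.range M) = b.1)).trans
        ((Equiv.subtypeEquivRight (fun M => by
          constructor
          · rintro ⟨⟨h1, _⟩, h3⟩
            exact ⟨fun i => (h1 i).2, h3⟩
          · rintro ⟨h1, h3⟩
            refine ⟨⟨fun i => ⟨b.2.1 (h3.le (Submodule.subset_span ⟨i, rfl⟩)), h1 i⟩, ?_⟩, h3⟩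
            rw [aux_rank_eq M, h3]
            exact b.2.2)).trans
        (auxRestrict b.1))))
    rw [Nat.card_congr e]
    have hcount := aux_nonzero_span_card (V := b.1) b.2.2 t
    rw [hfsum, hQ]
    exact_mod_cast hcount
  have h1 : (Nat.card S : ℚ) = (Fintype.card β : ℚ) * fsum := by
    rw [aux_card_fiber_sum f]
    push_cast
    rw [Finset.sum_congr rfl (fun b _ => h2 b), Finset.sum_const, nsmul_eq_mul,
      Finset.card_univ]
  -- the Grassmannian count
  have eG : {W' : Submodule F ↥E // Module.finrank F W' = r} ≃ β :=
    { toFun := fun W' => ⟨Submodule.map E.subtype W'.1, Submodule.map_subtype_le E W'.1,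
        ((Submodule.equivMapOfInjective E.subtype E.injective_subtype W'.1).finrank_eq).symm.trans
          W'.2⟩
      invFun := fun W => ⟨Submodule.comap E.subtype W.1, by
        have hmc : Submodule.map E.subtype (Submodule.comap E.subtype W.1) = W.1 := by
          rw [Submodule.map_comap_subtype, inf_eq_right.mpr W.2.1]
        rw [(Submodule.equivMapOfInjective E.subtype E.injective_subtype _).finrank_eq, hmc]
        exact W.2.2⟩
      left_inv := fun W' => Subtype.ext
        (Submodule.comap_map_eq_of_injective E.injective_subtype W'.1)
      right_inv := fun W => Subtype.ext (by
        show Submodule.map E.subtype (Submodule.comap E.subtype W.1) = W.1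
        rw [Submodule.map_comap_subtype, inf_eq_right.mpr W.2.1]) }
  have hGrass := aux_grassmann (V := ↥E) hv hr
  have hGrassQ : (Fintype.card β : ℚ) * ∏ j ∈ Finset.range r, (Q ^ r - Q ^ j) =
      ∏ j ∈ Finset.range r, (Q ^ v - Q ^ j) := by
    have hcongr : (Nat.card {W : Submodule F ↥E // Module.finrank F W = r} : ℚ) =
        (Fintype.card β : ℚ) := by
      rw [Nat.card_congr eG, Nat.card_eq_fintype_card]
    rw [← hcongr, hQ, ← aux_cast_prodQ hq1 r r, ← aux_cast_prodQ hq1 r v, ← Nat.cast_mul,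
      hGrass]
  -- convert the Gaussian binomial
  have hP : (∏ j ∈ Finset.range r, Q ^ j) ≠ 0 := by
    apply Finset.prod_ne_zero_iff.mpr
    intro j _
    positivity
  have hD1 : (∏ i ∈ Finset.range r, (Q ^ (i + 1) - 1)) ≠ 0 := by
    apply Finset.prod_ne_zero_iff.mpr
    intro i _
    have : (2 : ℚ) ≤ Q ^ (i + 1) := le_trans hQ2 (by
      calc Q = Q ^ 1 := (pow_one Q).symm
        _ ≤ Q ^ (i + 1) := pow_le_pow_right₀ (by linarith) (by omega))
    linarith
  have hsplit : ∀ w : ℕ, r ≤ w → ∏ j ∈ Finset.range r, (Q ^ w - Q ^ j) =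
      (∏ j ∈ Finset.range r, Q ^ j) * ∏ j ∈ Finset.range r, (Q ^ (w - j) - 1) := by
    intro w hw
    rw [← Finset.prod_mul_distrib]
    apply Finset.prod_congr rfl
    intro j hj
    rw [Finset.mem_range] at hj
    rw [mul_sub, mul_one, ← pow_add]
    congr 2
    omega
  have hreflect : ∏ j ∈ Finset.range r, (Q ^ (r - j) - 1) =
      ∏ i ∈ Finset.range r, (Q ^ (i + 1) - 1) := by
    rw [← Finset.prod_range_reflect (fun i => Q ^ (i + 1) - 1) r]
    apply Finset.prod_congr rfl
    intro j hj
    rw [Finset.mem_range] at hj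
    congr 2
    omega
  have hGq' : (Fintype.card β : ℚ) = Gq := by
    rw [hsplit v hr, hsplit r le_rfl, hreflect] at hGrassQ
    rw [hGq, Finset.prod_div_distrib]
    rw [eq_div_iff hD1]
    apply mul_left_cancel₀ hP
    linear_combination hGrassQ
  rw [h1, hGq']
end

section
/- Let C be an [n,k,d]_q linear code, l ≤ min{d,n-k}-1, and μ with l ≤ μ ≤ min{d,n-k}-1. Then the l-separating redundancy satisfies s_l(C) ≤ (n-k)·C_1(n,μ,l), and also s_l(C) ≤ (n-k-l)·binomial(n,l). -/
set_option linter.unusedSectionVars false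
set_option linter.unusedVariables false
set_option maxHeartbeats 1000000


variable {F : Type} [Field F] [Fintype F] [DecidableEq F]

/-- `H` is an `l`-separating parity-check matrix for `C`. -/
def IsSeparating {m n : ℕ} (C : Submodule F (Fin n → F)) (H : Matrix (Fin m) (Fin n) F)
    (l : ℕ) : Prop :=
  Submodule.span F (Set.range fun i => H i) = dualCode C ∧
    ∀ S : Finset (Fin n), S.card ≤ l →
      (subMat H S).rank = n - Module.finrank F C - S.card

/-- The `l`-separating redundancy of `C`. -/
noncomputable def sepRedundancy {n : ℕ} (C : Submodule F (Fin n → F)) (l : ℕ) : ℕ :=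
  sInf {m | ∃ H : Matrix (Fin m) (Fin n) F, IsSeparating C H l}

namespace SepAux
open Module Submodule

lemma mem_dualCode {ι : Type} [Fintype ι] {C : Submodule F (ι → F)} {x : ι → F} :
    x ∈ dualCode C ↔ ∀ c ∈ C, ∑ i, x i * c i = 0 := Iff.rfl

noncomputable def dotB (ι : Type) [Fintype ι] : LinearMap.BilinForm F (ι → F) :=
  LinearMap.mk₂ F (fun x y => ∑ i, x i * y i)
    (by intros; simp [add_mul, Finset.sum_add_distrib])
    (by intros; simp [Finset.mul_sum, mul_assoc, mul_left_comm])
    (by intros; simp [mul_add, Finset.sum_add_distrib])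
    (by intros; simp [Finset.mul_sum, mul_left_comm])

@[simp] lemma dotB_apply {ι : Type} [Fintype ι] (x y : ι → F) :
    dotB ι x y = ∑ i, x i * y i := rfl

lemma dotB_refl (ι : Type) [Fintype ι] : (dotB (F := F) ι).IsRefl := by
  intro x y h; simpa [mul_comm] using h

lemma dotB_nondeg (ι : Type) [Fintype ι] [DecidableEq ι] :
    (dotB (F := F) ι).Nondegenerate := by
  refine ⟨fun x hx => ?_, fun x hx => ?_⟩
  · funext j
    have := hx (Pi.single j 1)
    simpa [Pi.single_apply, mul_ite, Finset.sum_ite_eq'] using this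
  · funext j
    have := hx (Pi.single j 1)
    simpa [Pi.single_apply, ite_mul, Finset.sum_ite_eq, Finset.sum_ite_eq'] using this

lemma dualCode_eq_orthogonal {ι : Type} [Fintype ι] (C : Submodule F (ι → F)) :
    dualCode C = (dotB ι).orthogonal C := by
  ext x
  simp only [mem_dualCode, LinearMap.BilinForm.mem_orthogonal_iff, LinearMap.BilinForm.IsOrtho,
    dotB_apply]
  constructor
  · intro h c hc; rw [← h c hc]; exact Finset.sum_congr rfl (fun i _ => mul_comm _ _)
  · intro h c hc; rw [← h c hc]; exact Finset.sum_congr rfl (fun i _ => mul_comm _ _)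

lemma finrank_dualCode {ι : Type} [Fintype ι] [DecidableEq ι] (C : Submodule F (ι → F)) :
    finrank F (dualCode C) = Fintype.card ι - finrank F C := by
  rw [dualCode_eq_orthogonal,
    LinearMap.BilinForm.finrank_orthogonal (dotB_nondeg ι), Module.finrank_pi]

lemma dualCode_dualCode {ι : Type} [Fintype ι] [DecidableEq ι] (C : Submodule F (ι → F)) :
    dualCode (dualCode C) = C := by
  rw [dualCode_eq_orthogonal, dualCode_eq_orthogonal,
    LinearMap.BilinForm.orthogonal_orthogonal (dotB_nondeg ι) (dotB_refl ι)]

lemma dualCode_anti {ι : Type} [Fintype ι] {C D : Submodule F (ι → F)} (h : C ≤ D) :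
    dualCode D ≤ dualCode C := fun x hx c hc => hx c (h hc)

/-! ### vanishing submodule -/

variable {n : ℕ}

def vanishOn (F : Type) [Field F] {n : ℕ} (S : Finset (Fin n)) : Submodule F (Fin n → F) where
  carrier := {x | ∀ j ∈ S, x j = 0}
  add_mem' := by intro a b ha hb j hj; simp [ha j hj, hb j hj]
  zero_mem' := by intro j hj; simp
  smul_mem' := by intro a x hx j hj; simp [hx j hj]

lemma mem_vanishOn {S : Finset (Fin n)} {x : Fin n → F} :
    x ∈ vanishOn F S ↔ ∀ j ∈ S, x j = 0 := Iff.rfl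

/-- restriction map to coordinates in S -/
noncomputable def resMap (F : Type) [Field F] {n : ℕ} (S : Finset (Fin n)) :
    (Fin n → F) →ₗ[F] ({j // j ∈ S} → F) :=
  LinearMap.funLeft F F Subtype.val

@[simp] lemma resMap_apply {S : Finset (Fin n)} (x : Fin n → F) (j : {j // j ∈ S}) :
    resMap F S x j = x j.1 := rfl

/-- Surjectivity of the restriction of the dual code to few coordinates. -/
lemma resMap_surj {C : Submodule F (Fin n → F)} {d : ℕ} (hd : IsMinDist C d)
    {S : Finset (Fin n)} (hS : S.card < d) :
    Submodule.map (resMap F S) (dualCode C) = ⊤ := by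
  by_contra hne
  -- get a nonzero vector orthogonal to the image
  set W := Submodule.map (resMap F S) (dualCode C) with hW
  have hlt : finrank F W < Fintype.card {j // j ∈ S} := by
    rcases lt_or_eq_of_le (finrank_le W) with h | h
    · simpa [Module.finrank_pi] using h
    · exact absurd (Submodule.eq_top_of_finrank_eq (by simpa [Module.finrank_pi] using h)) hne
  have hpos : 0 < finrank F (dualCode W) := by
    rw [finrank_dualCode]; omega
  have hnb : dualCode W ≠ ⊥ := by
    intro h; rw [h] at hpos; simp at hpos
  obtain ⟨lam, hlamW, hlamne⟩ := Submodule.ne_bot_iff _ |>.mp hnb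
  -- extend lam by zero
  set lamh : Fin n → F := fun j => if h : j ∈ S then lam ⟨j, h⟩ else 0 with hlamh
  have hsum : ∀ x : Fin n → F, ∑ i, lamh i * x i = ∑ j : {j // j ∈ S}, lam j * x j.1 := by
    intro x
    rw [← Finset.sum_subset (Finset.subset_univ S)
      (by intro j _ hj; simp [lamh, hj] : ∀ j ∈ Finset.univ, j ∉ S → lamh j * x j = 0)]
    rw [← Finset.sum_attach S (fun j => lamh j * x j), Finset.univ_eq_attach]
    exact Finset.sum_congr rfl (fun j _ => by simp [lamh, j.2])
  have hmem : lamh ∈ C := by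
    rw [← dualCode_dualCode C]
    intro c hc
    rw [hsum c]
    exact hlamW (resMap F S c) ⟨c, hc, rfl⟩
  have hne0 : lamh ≠ 0 := by
    intro h
    apply hlamne
    funext j
    have := congrFun h j.1
    simpa [lamh, j.2] using this
  have hnorm : hammingNorm lamh ≤ S.card := by
    apply Finset.card_le_card
    intro j hj
    simp only [Finset.mem_filter, Finset.mem_univ, true_and] at hj
    by_contra hjS
    exact hj (by simp [lamh, hjS])
  have := hd.1 lamh hmem hne0
  omega

private lemma finrank_inf_ker {V : Submodule F (Fin n → F)} {M₂ : Type} [AddCommGroup M₂]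
    [Module F M₂] (f : (Fin n → F) →ₗ[F] M₂) :
    finrank F (V ⊓ LinearMap.ker f : Submodule F (Fin n → F)) =
      finrank F (LinearMap.ker (f.domRestrict V)) := by
  rw [← Submodule.finrank_map_subtype_eq V (LinearMap.ker (f.domRestrict V)),
    LinearMap.ker_domRestrict, Submodule.map_comap_subtype]

/-- Dimension of the part of a subspace vanishing on S, given surjective restriction. -/
lemma finrank_inf_vanishOn {D : Submodule F (Fin n → F)} {S : Finset (Fin n)}
    (hsurj : Submodule.map (resMap F S) D = ⊤) :
    finrank F (D ⊓ vanishOn F S : Submodule F (Fin n → F)) = finrank F D - S.card := by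
  have hker : (vanishOn F S : Submodule F (Fin n → F)) = LinearMap.ker (resMap F S) := by
    ext x
    simp only [mem_vanishOn, LinearMap.mem_ker]
    constructor
    · intro h; funext j; simpa using h j.1 j.2
    · intro h j hj; exact congrFun h ⟨j, hj⟩
  rw [hker, finrank_inf_ker]
  have hrn := LinearMap.finrank_range_add_finrank_ker ((resMap F S).domRestrict D)
  rw [LinearMap.range_domRestrict, hsurj] at hrn
  have : finrank F (⊤ : Submodule F ({j // j ∈ S} → F)) = S.card := by
    simp [Module.finrank_pi]
  omega

lemma finrank_le_inf_ker_scalar (V : Submodule F (Fin n → F)) (g : (Fin n → F) →ₗ[F] F) :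
    finrank F V ≤ finrank F (V ⊓ LinearMap.ker g : Submodule F (Fin n → F)) + 1 := by
  rw [finrank_inf_ker]
  have hrn := LinearMap.finrank_range_add_finrank_ker (g.domRestrict V)
  have : finrank F (LinearMap.range (g.domRestrict V)) ≤ 1 := by
    simpa using finrank_le (LinearMap.range (g.domRestrict V))
  omega

/-- In any coset of a subspace of dimension ≥ t supported in J, one finds a vector
with t zeros inside J. -/
lemma affine_zeros : ∀ (t : ℕ) (V : Submodule F (Fin n → F)) (J : Finset (Fin n)),
    (∀ y ∈ V, ∀ j, j ∉ J → y j = 0) → t ≤ finrank F V → ∀ x₀ : Fin n → F,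
    ∃ x' ∈ V, ∃ T : Finset (Fin n), T ⊆ J ∧ T.card = t ∧ ∀ j ∈ T, x₀ j + x' j = 0 := by
  intro t
  induction t with
  | zero => intro V J _ _ x₀; exact ⟨0, V.zero_mem, ∅, by simp⟩
  | succ t ih =>
    intro V J hsupp hrank x₀
    have hnb : V ≠ ⊥ := by
      intro h; rw [h] at hrank; simp [finrank_bot] at hrank
    obtain ⟨y, hyV, hy0⟩ := Submodule.ne_bot_iff _ |>.mp hnb
    obtain ⟨j, hyj⟩ := Function.ne_iff.mp hy0
    have hyj : y j ≠ 0 := hyj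
    have hjJ : j ∈ J := by
      by_contra hjJ
      exact hyj (hsupp y hyV j hjJ)
    set c : F := x₀ j / y j with hc
    set V' : Submodule F (Fin n → F) := V ⊓ LinearMap.ker (LinearMap.proj j) with hV'
    have hrank' : t ≤ finrank F V' := by
      have h2 := finrank_le_inf_ker_scalar V (LinearMap.proj (R := F) (φ := fun _ : Fin n => F) j)
      rw [← hV'] at h2
      omega
    have hsupp' : ∀ y' ∈ V', ∀ i, i ∉ J.erase j → y' i = 0 := by
      intro y' hy' i hi
      by_cases hij : i = j
      · subst hij; exact hy'.2
      · refine hsupp y' hy'.1 i (fun hiJ => hi (Finset.mem_erase.mpr ⟨hij, hiJ⟩))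
    obtain ⟨x'', hx''V', T', hT'J, hT'card, hT'⟩ := ih V' (J.erase j) hsupp' hrank' (x₀ - c • y)
    refine ⟨x'' - c • y, V.sub_mem hx''V'.1 (V.smul_mem c hyV), insert j T',
      Finset.insert_subset hjJ (hT'J.trans (Finset.erase_subset j J)), ?_, ?_⟩
    · rw [Finset.card_insert_of_notMem (fun h => (Finset.mem_erase.mp (hT'J h)).1 rfl)]
      omega
    · intro i hi
      rcases Finset.mem_insert.mp hi with h | h
      · subst h
        have hx''j : x'' i = 0 := hx''V'.2
        simp only [Pi.sub_apply, Pi.smul_apply, smul_eq_mul]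
        rw [hx''j, hc]
        field_simp
        ring
      · have := hT' i h
        simp only [Pi.sub_apply, Pi.smul_apply, smul_eq_mul] at this ⊢
        linear_combination this

/-- Key spanning lemma: the part of the dual code vanishing on `S` is spanned by the parts
vanishing on supersets of `S` of size `l`. -/
lemma span_vanish {C : Submodule F (Fin n → F)} {d k l : ℕ}
    (hk : finrank F C = k) (hd : IsMinDist C d) (hld : l < d) (hlnk : l < n - k)
    {S : Finset (Fin n)} (hS : S.card ≤ l) {M : Submodule F (Fin n → F)}
    (hM : ∀ T : Finset (Fin n), S ⊆ T → T.card = l → dualCode C ⊓ vanishOn F T ≤ M) :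
    dualCode C ⊓ vanishOn F S ≤ M := by
  by_contra habs
  set P : Submodule F (Fin n → F) := dualCode C ⊓ vanishOn F S with hP
  have hkn : k ≤ n := by
    rw [← hk]
    simpa [Module.finrank_pi] using finrank_le C
  have hScard : S.card ≤ n := le_trans (Finset.card_le_univ S) (by simp)
  have hfinP : finrank F P = (n - k) - S.card := by
    have := finrank_inf_vanishOn (D := dualCode C) (S := S)
      (resMap_surj hd (lt_of_le_of_lt hS hld))
    rw [this, finrank_dualCode, hk, Fintype.card_fin]
  -- M' := M ⊓ P is a proper subspace of P
  set M' : Submodule F (Fin n → F) := M ⊓ P with hM'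
  have hM'lt : M' < P := by
    rcases lt_or_eq_of_le (inf_le_right : M' ≤ P) with h | h
    · exact h
    · exact absurd (h ▸ (inf_le_left : M' ≤ M)) habs
  have hfinrank_lt : finrank F M' < finrank F P := Submodule.finrank_lt_finrank_of_lt hM'lt
  have hPn : finrank F P ≤ n := by
    have := finrank_le P
    simpa [Module.finrank_pi] using this
  -- get a separating vector v
  have hdlt : dualCode P < dualCode M' := by
    apply lt_of_le_of_ne (dualCode_anti (le_of_lt hM'lt))
    intro h
    have h1 := finrank_dualCode P
    have h2 := finrank_dualCode M'
    rw [h] at h1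
    rw [h1, Fintype.card_fin] at h2
    omega
  obtain ⟨v, hvM', hvP⟩ := SetLike.exists_of_lt hdlt
  rw [mem_dualCode] at hvP
  push_neg at hvP
  obtain ⟨x, hxP, hvx⟩ := hvP
  -- the affine trick
  set g : (Fin n → F) →ₗ[F] F := dotB (Fin n) v with hg
  set V : Submodule F (Fin n → F) := P ⊓ LinearMap.ker g with hV
  have hrankV : l - S.card ≤ finrank F V := by
    have := finrank_le_inf_ker_scalar P g
    rw [← hV] at this
    omega
  have hsuppV : ∀ y ∈ V, ∀ j, j ∉ Sᶜ → y j = 0 := by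
    intro y hy j hj
    have hjS : j ∈ S := by simpa using hj
    exact hy.1.2 j hjS
  obtain ⟨x', hx'V, T, hTS, hTcard, hT⟩ :=
    affine_zeros (l - S.card) V Sᶜ hsuppV hrankV x
  set y : Fin n → F := x + x' with hy
  have hyP : y ∈ P := P.add_mem hxP hx'V.1
  have hdisj : Disjoint S T := by
    rw [Finset.disjoint_left]
    intro a haS haT
    exact (Finset.mem_compl.mp (hTS haT)) haS
  have hyM : y ∈ M := by
    refine hM (S ∪ T) Finset.subset_union_left ?_ ⟨hyP.1, ?_⟩
    · rw [Finset.card_union_of_disjoint hdisj, hTcard]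
      omega
    · intro j hj
      rcases Finset.mem_union.mp hj with h | h
      · exact hyP.2 j h
      · exact hT j h
  have hyM' : y ∈ M' := ⟨hyM, hyP⟩
  have hzero := hvM' y hyM'
  have hker : ∑ i, v i * x' i = 0 := hx'V.2
  rw [hy] at hzero
  simp only [Pi.add_apply, mul_add, Finset.sum_add_distrib] at hzero
  rw [hker, add_zero] at hzero
  exact hvx hzero

lemma isSeparating_of_rows {k d l : ℕ} {C : Submodule F (Fin n → F)} (hk : finrank F C = k)
    (hd : IsMinDist C d) (hld : l < d) {m : ℕ} (rows : Fin m → (Fin n → F))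
    (hrows : ∀ i, rows i ∈ dualCode C)
    (hspan : ∀ S : Finset (Fin n), S.card ≤ l →
      dualCode C ⊓ vanishOn F S ≤
        Submodule.span F {x | ∃ i, (∀ j ∈ S, rows i j = 0) ∧ rows i = x}) :
    IsSeparating C (Matrix.of rows) l := by
  constructor
  · refine le_antisymm (Submodule.span_le.mpr ?_) ?_
    · rintro x ⟨i, rfl⟩
      exact hrows i
    · intro x hx
      have h0 := hspan ∅ (Nat.zero_le l)
      have hx' : x ∈ dualCode C ⊓ vanishOn F ∅ := ⟨hx, by simp [mem_vanishOn]⟩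
      refine Submodule.span_mono ?_ (h0 hx')
      rintro z ⟨i, _, rfl⟩
      exact ⟨i, rfl⟩
  · intro S hScard
    set H : Matrix (Fin m) (Fin n) F := Matrix.of rows with hH
    set R : Set (Fin n → F) := {x | ∃ i, (∀ j ∈ S, rows i j = 0) ∧ rows i = x} with hR
    set π : (Fin n → F) →ₗ[F] ({j : Fin n // j ∉ S} → F) :=
      LinearMap.funLeft F F Subtype.val with hπ
    have hrange : Set.range (subMat H S) = π '' R := by
      ext z
      constructor
      · rintro ⟨i, rfl⟩
        exact ⟨rows i.1, ⟨i.1, i.2, rfl⟩, rfl⟩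
      · rintro ⟨x, ⟨i, hvan, rfl⟩, rfl⟩
        exact ⟨⟨i, hvan⟩, rfl⟩
    set P : Submodule F (Fin n → F) := dualCode C ⊓ vanishOn F S with hP
    have hspanR : Submodule.span F R = P := by
      refine le_antisymm (Submodule.span_le.mpr ?_) (hspan S hScard)
      rintro x ⟨i, hvan, rfl⟩
      exact ⟨hrows i, hvan⟩
    have hrank : (subMat H S).rank = finrank F (Submodule.map π P) := by
      rw [Matrix.rank_eq_finrank_span_row, Matrix.row, hrange, Submodule.span_image, hspanR]
    rw [hrank]
    have hker : LinearMap.ker (π.domRestrict P) = ⊥ := by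
      rw [LinearMap.ker_eq_bot']
      rintro ⟨x, hxP⟩ hx0
      ext1
      funext j
      by_cases hjS : j ∈ S
      · exact hxP.2 j hjS
      · have hx0' : π x = 0 := hx0
        exact congrFun hx0' ⟨j, hjS⟩
    have hrn := LinearMap.finrank_range_add_finrank_ker (π.domRestrict P)
    rw [LinearMap.range_domRestrict, hker, finrank_bot, add_zero] at hrn
    rw [hrn]
    have hfinP : finrank F P = (n - k) - S.card := by
      rw [hP, finrank_inf_vanishOn (resMap_surj hd (lt_of_le_of_lt hScard hld)),
        finrank_dualCode, hk, Fintype.card_fin]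
    rw [hfinP, hk]

lemma exists_spanning_fun (p : Submodule F (Fin n → F)) (r : ℕ) (hr : finrank F p = r) :
    ∃ f : Fin r → (Fin n → F), (∀ i, f i ∈ p) ∧ Submodule.span F (Set.range f) = p := by
  set b := Module.finBasis F p with hb
  refine ⟨fun i => (b (finCongr hr.symm i) : Fin n → F), fun i => (b _).2, ?_⟩
  have hrange : (Set.range fun i => ((b (finCongr hr.symm i) : p) : Fin n → F)) =
      p.subtype '' Set.range b := by
    ext z
    constructor
    · rintro ⟨i, rfl⟩; exact ⟨b (finCongr hr.symm i), ⟨_, rfl⟩, rfl⟩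
    · rintro ⟨w, ⟨i, rfl⟩, rfl⟩; exact ⟨finCongr hr i, by simp⟩
  rw [hrange, Submodule.span_image, b.span_eq, Submodule.map_subtype_top]

lemma bound_choose {C : Submodule F (Fin n → F)} {k d l : ℕ}
    (hk : finrank F C = k) (hd : IsMinDist C d) (hld : l < d) (hlnk : l < n - k)
    (hln : l ≤ n) :
    ∃ H : Matrix (Fin ((n - k - l) * n.choose l)) (Fin n) F, IsSeparating C H l := by
  classical
  set r := n - k - l with hr
  have hdimT : ∀ T : {T : Finset (Fin n) // T.card = l},
      finrank F (dualCode C ⊓ vanishOn F T.1 : Submodule F (Fin n → F)) = r := by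
    intro T
    rw [finrank_inf_vanishOn (resMap_surj hd (by rw [T.2]; exact hld)), finrank_dualCode, hk,
      Fintype.card_fin, T.2]
  choose f hf1 hf2 using fun T : {T : Finset (Fin n) // T.card = l} =>
    exists_spanning_fun (dualCode C ⊓ vanishOn F T.1) r (hdimT T)
  have hcard : Fintype.card ({T : Finset (Fin n) // T.card = l} × Fin r) =
      (n - k - l) * n.choose l := by
    rw [Fintype.card_prod, Fintype.card_finset_len, Fintype.card_fin, Fintype.card_fin, mul_comm]
  set e : Fin ((n - k - l) * n.choose l) ≃ ({T : Finset (Fin n) // T.card = l} × Fin r) :=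
    Fintype.equivOfCardEq (by rw [hcard, Fintype.card_fin]) with he
  set rows : Fin ((n - k - l) * n.choose l) → (Fin n → F) :=
    fun i => f (e i).1 (e i).2 with hrows_def
  refine ⟨Matrix.of rows, isSeparating_of_rows hk hd hld rows ?_ ?_⟩
  · intro i
    exact (hf1 (e i).1 (e i).2).1
  · intro S hScard
    apply span_vanish hk hd hld hlnk hScard
    intro T hST hTcard
    rw [← hf2 ⟨T, hTcard⟩]
    apply Submodule.span_le.mpr
    rintro z ⟨i0, rfl⟩
    apply Submodule.subset_span
    refine ⟨e.symm (⟨T, hTcard⟩, i0), ?_, ?_⟩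
    · intro j hj
      simp only [hrows_def, Equiv.apply_symm_apply]
      exact (hf1 ⟨T, hTcard⟩ i0).2 j (hST hj)
    · simp only [hrows_def, Equiv.apply_symm_apply]

lemma covering_set_nonempty {n μ l : ℕ} (hlμ : l ≤ μ) (hμn : μ ≤ n) :
    {m | ∃ B : Multiset (Finset (Fin n)),
      (∀ b ∈ B, b.card = μ) ∧
      (∀ s : Finset (Fin n), s.card = l → 1 ≤ Multiset.card (B.filter fun b => s ⊆ b)) ∧
      Multiset.card B = m}.Nonempty := by
  classical
  refine ⟨Multiset.card (Finset.univ.powersetCard μ).val,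
    (Finset.univ.powersetCard μ).val, ?_, ?_, rfl⟩
  · intro b hb
    exact (Finset.mem_powersetCard.mp (Finset.mem_val.mp hb)).2
  · intro s hs
    obtain ⟨t, hst, htcard⟩ := Finset.exists_superset_card_eq
      (le_trans (le_of_eq hs) hlμ) (by simpa using hμn)
    exact Multiset.card_pos_iff_exists_mem.mpr
      ⟨t, Multiset.mem_filter.mpr
        ⟨Finset.mem_powersetCard.mpr ⟨Finset.subset_univ t, htcard⟩, hst⟩⟩

lemma bound_cover {C : Submodule F (Fin n → F)} {k d l μ : ℕ}
    (hk : finrank F C = k) (hd : IsMinDist C d) (hld : l < d) (hlnk : l < n - k)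
    (hlμ : l ≤ μ) (hμd : μ < d) (hμnk : μ < n - k) (hln : l ≤ n) :
    ∃ H : Matrix (Fin ((n - k) * coveringNumber 1 n μ l)) (Fin n) F, IsSeparating C H l := by
  classical
  have hμn : μ ≤ n := le_trans (le_of_lt hμnk) (Nat.sub_le n k)
  set mB := coveringNumber 1 n μ l with hmB
  have hmem := Nat.sInf_mem (covering_set_nonempty hlμ hμn)
  obtain ⟨B, hBμ, hBcov, hBlen⟩ := hmem
  -- blocks as a function
  set L := B.toList with hL
  have hLlen : L.length = mB := by rw [hL, Multiset.length_toList, hBlen]; rfl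
  set block : Fin mB → Finset (Fin n) := fun a => L.get (Fin.cast hLlen.symm a) with hblock
  have hblockB : ∀ a, block a ∈ B := by
    intro a
    rw [← Multiset.mem_toList]
    exact L.get_mem _
  set blockT : Fin mB → {T : Finset (Fin n) // T.card = μ} :=
    fun a => ⟨block a, hBμ _ (hblockB a)⟩ with hblockT
  -- spanning families of the shortened duals
  set rμ := n - k - μ with hrμ
  have hdimT : ∀ T : {T : Finset (Fin n) // T.card = μ},
      finrank F (dualCode C ⊓ vanishOn F T.1 : Submodule F (Fin n → F)) = rμ := by
    intro T
    rw [finrank_inf_vanishOn (resMap_surj hd (by rw [T.2]; exact hμd)), finrank_dualCode, hk,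
      Fintype.card_fin, T.2]
  choose g hg1 hg2 using fun T : {T : Finset (Fin n) // T.card = μ} =>
    exists_spanning_fun (dualCode C ⊓ vanishOn F T.1) rμ (hdimT T)
  -- indicator-restriction vectors
  have hxv : ∀ (T : {T : Finset (Fin n) // T.card = μ}) (j : {j // j ∈ T.1}),
      ∃ x, x ∈ dualCode C ∧ resMap F T.1 x = Pi.single j 1 := by
    intro T j
    have := resMap_surj (C := C) hd (S := T.1) (by rw [T.2]; exact hμd)
    have hmem : (Pi.single j 1 : {j // j ∈ T.1} → F) ∈
        Submodule.map (resMap F T.1) (dualCode C) := by rw [this]; trivial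
    obtain ⟨x, hx1, hx2⟩ := hmem
    exact ⟨x, hx1, hx2⟩
  choose xv hxv1 hxv2 using hxv
  have hxv_apply : ∀ (T : {T : Finset (Fin n) // T.card = μ}) (j : {j // j ∈ T.1})
      (j' : Fin n) (hj' : j' ∈ T.1), xv T j j' = if (⟨j', hj'⟩ : {j // j ∈ T.1}) = j then 1 else 0 := by
    intro T j j' hj'
    have := congrFun (hxv2 T j) ⟨j', hj'⟩
    rw [resMap_apply] at this
    rw [this, Pi.single_apply]
  -- per block equivalence
  have hccT : ∀ T : {T : Finset (Fin n) // T.card = μ},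
      Fintype.card (Fin (n - k)) = Fintype.card (Fin rμ ⊕ {j // j ∈ T.1}) := by
    intro T
    rw [Fintype.card_fin, Fintype.card_sum, Fintype.card_fin, Fintype.card_coe, T.2, hrμ]
    omega
  set eT : ∀ T : {T : Finset (Fin n) // T.card = μ},
      Fin (n - k) ≃ (Fin rμ ⊕ {j // j ∈ T.1}) :=
    fun T => Fintype.equivOfCardEq (hccT T) with heT
  set rowOf : ∀ T : {T : Finset (Fin n) // T.card = μ}, Fin (n - k) → (Fin n → F) :=
    fun T i => Sum.elim (g T) (xv T) (eT T i) with hrowOf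
  -- global rows
  set e : Fin ((n - k) * mB) ≃ (Fin (n - k) × Fin mB) :=
    Fintype.equivOfCardEq (by simp) with he
  set rows : Fin ((n - k) * mB) → (Fin n → F) :=
    fun i => rowOf (blockT (e i).2) (e i).1 with hrows_def
  have hrows_mem : ∀ T i, rowOf T i ∈ dualCode C := by
    intro T i
    rcases h : eT T i with i0 | j
    · simpa only [hrowOf, h, Sum.elim_inl, SetLike.mem_coe] using (hg1 T i0).1
    · simpa only [hrowOf, h, Sum.elim_inr] using hxv1 T j
  refine ⟨Matrix.of rows, isSeparating_of_rows hk hd hld rows (fun i => hrows_mem _ _) ?_⟩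
  intro S hScard
  -- find a block containing S
  obtain ⟨S', hSS', hS'card⟩ := Finset.exists_superset_card_eq hScard (by simpa using hln)
  have hcov := hBcov S' hS'card
  obtain ⟨b, hbf⟩ := Multiset.card_pos_iff_exists_mem.mp
    (lt_of_lt_of_le Nat.zero_lt_one hcov)
  have hbB : b ∈ B := Multiset.mem_of_mem_filter hbf
  have hS'b : S' ⊆ b := (Multiset.mem_filter.mp hbf).2
  obtain ⟨ib, hib⟩ := List.mem_iff_get.mp (Multiset.mem_toList.mpr hbB)
  set a : Fin mB := Fin.cast hLlen ib with ha
  have hba : block a = b := by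
    have hcast : Fin.cast hLlen.symm a = ib := by ext; simp [ha]
    show L.get (Fin.cast hLlen.symm a) = b
    rw [hcast]
    exact hib
  set T : {T : Finset (Fin n) // T.card = μ} := blockT a with hTdef
  have hTb : T.1 = b := hba
  have hSb : S ⊆ T.1 := by rw [hTb]; exact hSS'.trans hS'b
  -- now show the span condition
  intro x hx
  set z : Fin n → F := x - ∑ j ∈ T.1.attach, x j.1 • xv T j with hz
  have hzT : z ∈ dualCode C ⊓ vanishOn F T.1 := by
    constructor
    · refine Submodule.sub_mem _ hx.1 (Submodule.sum_mem _ ?_)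
      intro j _
      exact Submodule.smul_mem _ _ (hxv1 T j)
    · intro j' hj'
      rw [hz]
      simp only [Pi.sub_apply, Finset.sum_apply, Pi.smul_apply, smul_eq_mul]
      have hsum : ∑ j ∈ T.1.attach, x j.1 * xv T j j' = x j' := by
        rw [Finset.sum_congr rfl (fun j _ => by
          rw [hxv_apply T j j' hj', mul_ite, mul_one, mul_zero])]
        rw [Finset.sum_ite_eq T.1.attach (⟨j', hj'⟩ : {j // j ∈ T.1}) (fun j => x j.1)]
        simp
      rw [hsum, sub_self]
  set RS : Set (Fin n → F) := {w | ∃ i, (∀ j ∈ S, rows i j = 0) ∧ rows i = w} with hRS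
  have hrows_eq : ∀ (a' : Fin mB) (i' : Fin (n - k)),
      rows (e.symm (i', a')) = rowOf (blockT a') i' := by
    intro a' i'
    simp only [hrows_def, Equiv.apply_symm_apply]
  have hrow_g : ∀ i0 : Fin rμ, rowOf T ((eT T).symm (Sum.inl i0)) = g T i0 := by
    intro i0
    simp only [hrowOf]
    rw [Equiv.apply_symm_apply]
    rfl
  have hrow_xv : ∀ j : {j // j ∈ T.1}, rowOf T ((eT T).symm (Sum.inr j)) = xv T j := by
    intro j
    simp only [hrowOf]
    rw [Equiv.apply_symm_apply]
    rfl
  have hg_mem : ∀ i0 : Fin rμ, g T i0 ∈ RS := by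
    intro i0
    refine ⟨e.symm (((eT T).symm (Sum.inl i0)), a), ?_, ?_⟩
    · intro j hj
      rw [hrows_eq, ← hTdef, hrow_g]
      exact (hg1 T i0).2 j (hSb hj)
    · rw [hrows_eq, ← hTdef, hrow_g]
  have hxv_mem : ∀ j : {j // j ∈ T.1}, j.1 ∉ S → xv T j ∈ RS := by
    intro j hjS
    refine ⟨e.symm (((eT T).symm (Sum.inr j)), a), ?_, ?_⟩
    · intro j' hj'
      rw [hrows_eq, ← hTdef, hrow_xv]
      rw [hxv_apply T j j' (hSb hj')]
      rw [if_neg]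
      intro hcon
      exact hjS (by rw [← hcon]; exact hj')
    · rw [hrows_eq, ← hTdef, hrow_xv]
  have hzspan : z ∈ Submodule.span F RS := by
    have : z ∈ Submodule.span F (Set.range (g T)) := by
      rw [hg2 T]; exact hzT
    refine Submodule.span_mono ?_ this
    rintro w ⟨i0, rfl⟩
    exact hg_mem i0
  have hxeq : x = z + ∑ j ∈ T.1.attach, x j.1 • xv T j := by rw [hz]; ring
  rw [hxeq]
  refine Submodule.add_mem _ hzspan (Submodule.sum_mem _ ?_)
  intro j _
  by_cases hxj : x j.1 = 0
  · rw [hxj, zero_smul]; exact Submodule.zero_mem _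
  · have hjS : j.1 ∉ S := fun hc => hxj (hx.2 j.1 hc)
    exact Submodule.smul_mem _ _ (Submodule.subset_span (hxv_mem j hjS))

end SepAux

/-- Design-theoretic upper bounds on the `l`-separating redundancy. -/
theorem stmt_11 (n k d l μ : ℕ)
    (C : Submodule F (Fin n → F)) (hk : Module.finrank F C = k) (hd : IsMinDist C d)
    (hl : l ≤ min d (n - k) - 1) (hlμ : l ≤ μ) (hμ : μ ≤ min d (n - k) - 1) :
    sepRedundancy C l ≤ (n - k) * coveringNumber 1 n μ l ∧
      sepRedundancy C l ≤ (n - k - l) * n.choose l := by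
  classical
  have hkn : k ≤ n := by
    rw [← hk]
    simpa [Module.finrank_pi] using Submodule.finrank_le C
  have hd1 : 1 ≤ d := by
    obtain ⟨c, hcC, hc0, hcd⟩ := hd.2
    rcases Nat.eq_zero_or_pos d with h | h
    · rw [h] at hcd
      exact absurd (hammingNorm_eq_zero.mp hcd) hc0
    · exact h
  by_cases hnk : n ≤ k
  · -- degenerate case : C is the full space
    have hdual : dualCode C = ⊥ := by
      apply Submodule.finrank_eq_zero.mp
      rw [SepAux.finrank_dualCode, Fintype.card_fin, hk]
      omega
    have h0 : (0 : ℕ) ∈ {m | ∃ H : Matrix (Fin m) (Fin n) F, IsSeparating C H l} := by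
      refine ⟨Matrix.of (fun _ _ => 0), ?_, ?_⟩
      · rw [Set.range_eq_empty, Submodule.span_empty, hdual]
      · intro S hS
        haveI : IsEmpty {i : Fin 0 // ∀ j ∈ S, (Matrix.of (fun (_ : Fin 0) (_ : Fin n) => (0:F))) i j = 0} :=
          ⟨fun x => x.1.elim0⟩
        rw [Matrix.rank_eq_finrank_span_row, Set.range_eq_empty, Submodule.span_empty,
          finrank_bot, hk]
        omega
    have hle := Nat.sInf_le h0
    exact ⟨le_trans hle (Nat.zero_le _), le_trans hle (Nat.zero_le _)⟩
  · have hld : l < d := by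
      have h1 := min_le_left d (n - k)
      omega
    have hlnk : l < n - k := by
      have h1 := min_le_right d (n - k)
      omega
    have hμd : μ < d := by
      have h1 := min_le_left d (n - k)
      omega
    have hμnk : μ < n - k := by
      have h1 := min_le_right d (n - k)
      omega
    have hln : l ≤ n := by omega
    constructor
    · obtain ⟨H, hH⟩ := SepAux.bound_cover hk hd hld hlnk hlμ hμd hμnk hln
      exact Nat.sInf_le ⟨H, hH⟩
    · obtain ⟨H, hH⟩ := SepAux.bound_choose hk hd hld hlnk hln
      exact Nat.sInf_le ⟨H, hH⟩
end

section
/- Let C be an [n,k,d]_q linear code with dual distance d⊥ and l ≤ min{d,n-k}-1. Let H be an l-separating parity-check matrix for C with rows r_0,...,r_{m-1}. Then the pair ({0,...,n-1}, B) where B is the multiset of zero-sets (complements of supports) of the rows r_i forms an l-(n, K, n-k-l) generalized covering where every block has size at most n-d⊥: every l-subset of coordinates is contained in the zero-set of at least n-k-l rows of H. -/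
variable {F : Type} [Field F] [Fintype F] [DecidableEq F]

open Finset

theorem card_filter_eq_zero_add_hammingNorm {ι : Type*} [Fintype ι] {β : ι → Type*}
    [∀ i, Zero (β i)] [∀ i, DecidableEq (β i)] (x : ∀ i, β i) :
    #{i | x i = 0} + hammingNorm x = Fintype.card ι :=
  card_filter_add_card_filter_not _

omit [Fintype F] in
theorem IsMinDist.card_filter_eq_zero_le {ι : Type} [Fintype ι] {D : Submodule F (ι → F)}
    {d : ℕ} (hD : IsMinDist D d) {c : ι → F} (hc : c ∈ D) (hc0 : c ≠ 0) :
    #{i | c i = 0} ≤ Fintype.card ι - d := by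
  have := card_filter_eq_zero_add_hammingNorm c
  have := hD.1 c hc hc0
  omega

omit [Fintype F] [DecidableEq F] in
theorem IsSeparating.row_mem_dualCode {m n l : ℕ} {C : Submodule F (Fin n → F)}
    {H : Matrix (Fin m) (Fin n) F} (hH : IsSeparating C H l) (i : Fin m) :
    H i ∈ dualCode C :=
  hH.1 ▸ Submodule.subset_span ⟨i, rfl⟩

omit [Fintype F] [DecidableEq F] in
theorem IsSeparating.le_card_rows_vanishing {m n l : ℕ} {C : Submodule F (Fin n → F)}
    {H : Matrix (Fin m) (Fin n) F} (hH : IsSeparating C H l) {S : Finset (Fin n)}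
    [DecidablePred fun i => ∀ j ∈ S, H i j = 0] (hS : #S ≤ l) :
    n - Module.finrank F C - #S ≤ #{i | ∀ j ∈ S, H i j = 0} := by
  rw [← hH.2 S hS, ← Fintype.card_subtype]
  exact Matrix.rank_le_card_height _

theorem stmt_13_general (n k dperp l mrows : ℕ)
    (C : Submodule F (Fin n → F)) (hk : Module.finrank F C = k)
    (hdp : IsMinDist (dualCode C) dperp)
    (H : Matrix (Fin mrows) (Fin n) F) (hH : IsSeparating C H l) :
    (∀ S : Finset (Fin n), S.card = l →
        n - k - l ≤ (@Finset.filter _ (fun i : Fin mrows => ∀ j ∈ S, H i j = 0)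
          (fun _ => Finset.decidableDforallFinset) Finset.univ).card) ∧
      ∀ i, H i ≠ 0 → (Finset.univ.filter fun j : Fin n => H i j = 0).card ≤ n - dperp := by
  refine ⟨fun S hS => ?_, fun i hi => ?_⟩
  · -- instance search does not find this `DecidablePred` by itself
    let : DecidablePred fun i => ∀ j ∈ S, H i j = 0 := fun _ => decidableDforallFinset
    exact hk ▸ hS ▸ hH.le_card_rows_vanishing hS.le
  · simpa using hdp.card_filter_eq_zero_le (hH.row_mem_dualCode i) hi

/-- The zero-sets of the rows of an `l`-separating parity-check matrix form an
`l`-(n, K, n-k-l) generalized covering whose blocks (zero-sets of nonzero rows) have size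
at most `n - d⊥`. -/
theorem stmt_13 (n k d dperp l mrows : ℕ)
    (C : Submodule F (Fin n → F)) (hk : Module.finrank F C = k) (hd : IsMinDist C d)
    (hdp : IsMinDist (dualCode C) dperp)
    (hl : l ≤ min d (n - k) - 1)
    (H : Matrix (Fin mrows) (Fin n) F) (hH : IsSeparating C H l) :
    (∀ S : Finset (Fin n), S.card = l →
        n - k - l ≤ (@Finset.filter _ (fun i : Fin mrows => ∀ j ∈ S, H i j = 0)
          (fun _ => Finset.decidableDforallFinset) Finset.univ).card) ∧
      ∀ i, H i ≠ 0 → (Finset.univ.filter fun j : Fin n => H i j = 0).card ≤ n - dperp :=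
  stmt_13_general n k dperp l mrows C hk hdp H hH
end
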